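/- arXiv:2407.04030 — 10 statements merged into one kernel-verified Lean document; each statement's English description precedes it below -/
import Mathlib

section
/- Let M be a finite nonempty metric space with n points. There exist k ≥ 1 and a finite nonempty metric space B such that for every finite nonempty metric space C there exists a coloring χ : NESurj(C, M) → Fin k with the property that for every non-expansive surjection w : C → B the set {χ(f ∘ w) : f ∈ NESurj(B, M)} has at least n! elements. (In other words, the dual small Ramsey degree of M with respect to non-expansive surjections is at least |M|!, so together with the matching upper bound it equals |M|!.) -/
/-- A non-expansive surjection between metric spaces. -/
def IsNESurj {X Y : Type*} [MetricSpace X] [MetricSpace Y] (f : X → Y) : Prop :=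
  Function.Surjective f ∧ ∀ x y : X, dist (f x) (f y) ≤ dist x y

/-- For every finite nonempty metric space `C` there is a `k`-coloring of the
non-expansive surjections `C → M` attaining at least `t` values on every set of the
form `{f ∘ w : f ∈ NESurj(B, M)}` with `w ∈ NESurj(C, B)`. -/
def LowerOsc (B M : Type) [MetricSpace B] [MetricSpace M] (k t : ℕ) : Prop :=
  ∀ (C : Type) [MetricSpace C] [Finite C] [Nonempty C],
    ∃ χ : {f : C → M // IsNESurj f} → Fin k,
      ∀ w : C → B, IsNESurj w →
        t ≤ {c : Fin k | ∃ g : {f : C → M // IsNESurj f},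
              (∃ f : B → M, IsNESurj f ∧ g.1 = f ∘ w) ∧ χ g = c}.ncard

open Function Finset

noncomputable def flatMetric (n : ℕ) (D : ℝ) (hD : 0 < D) : MetricSpace (Fin n) where
  dist i j := if i = j then 0 else D
  dist_self i := by simp
  dist_comm i j := by
    by_cases h : i = j
    · simp [h]
    · rw [if_neg h, if_neg (fun hji : j = i => h hji.symm)]
  dist_triangle i j k := by
    by_cases h2 : i = j <;> by_cases h3 : j = k
    · simp [h2, h3]
    · simp [h2, h3, fun h : i = k => h3 (h2.symm.trans h), hD.le]
    · simp [h2, h3, fun h : i = k => h2 (h.trans h3.symm), hD.le]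
    · split_ifs <;> linarith
  eq_of_dist_eq_zero := by
    intro i j h
    by_cases hij : i = j
    · exact hij
    · simp only [if_neg hij] at h; exact absurd h hD.ne'


noncomputable def fhit {C γ : Type*} (ι : C → ℕ) (h : C → γ) (m : γ) : ℕ :=
  sInf (ι '' (h ⁻¹' {m}))

theorem fhit_exists {C γ : Type*} (ι : C → ℕ) {h : C → γ} (hs : Surjective h) (m : γ) :
    ∃ c, h c = m ∧ ι c = fhit ι h m := by
  obtain ⟨c, hc⟩ := hs m
  have hne : (ι '' (h ⁻¹' {m})).Nonempty := ⟨ι c, c, hc, rfl⟩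
  obtain ⟨c', hc', hc2⟩ := Nat.sInf_mem hne
  exact ⟨c', hc', hc2⟩

theorem fhit_inj {C γ : Type*} {ι : C → ℕ} (hι : Injective ι) {h : C → γ}
    (hs : Surjective h) : Injective (fhit ι h) := by
  intro a b hab
  obtain ⟨c, hc, hc'⟩ := fhit_exists ι hs a
  obtain ⟨d, hd, hd'⟩ := fhit_exists ι hs b
  rw [← hc, ← hd]
  congr 1
  exact hι (by rw [hc', hd', hab])

theorem fhit_comp {C γ δ : Type*} (ι : C → ℕ) (w : C → γ) (p : γ ≃ δ) (m : δ) :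
    fhit ι (⇑p ∘ w) m = fhit ι w (p.symm m) := by
  unfold fhit
  have : (⇑p ∘ w) ⁻¹' {m} = w ⁻¹' {p.symm m} := by
    ext c; simp [Equiv.eq_symm_apply]
  rw [this]

noncomputable def rk {C γ : Type*} [Fintype γ] (ι : C → ℕ) (h : C → γ) (m : γ) : ℕ :=
  (Finset.univ.filter fun m' => fhit ι h m' < fhit ι h m).card

theorem rk_lt {C γ : Type*} [Fintype γ] (ι : C → ℕ) (h : C → γ) (m : γ) :
    rk ι h m < Fintype.card γ := by
  have hm : m ∉ (Finset.univ.filter fun m' => fhit ι h m' < fhit ι h m) := by simp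
  rw [← Finset.card_univ]
  exact Finset.card_lt_card ⟨Finset.subset_univ _, fun hsub => hm (hsub (mem_univ m))⟩

theorem rk_strict {C γ : Type*} [Fintype γ] (ι : C → ℕ) (h : C → γ) {a b : γ}
    (hab : fhit ι h a < fhit ι h b) : rk ι h a < rk ι h b := by
  refine Finset.card_lt_card ⟨fun x hx => ?_, fun hsub => ?_⟩
  · simp only [mem_filter, mem_univ, true_and] at hx ⊢
    exact hx.trans hab
  · have ha : a ∈ (Finset.univ.filter fun m' => fhit ι h m' < fhit ι h b) := by
      simp [hab]
    have := hsub ha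
    simp at this

theorem rk_inj {C γ : Type*} [Fintype γ] {ι : C → ℕ} (hι : Injective ι) {h : C → γ}
    (hs : Surjective h) : Injective (rk ι h) := by
  intro a b hab
  by_contra hne
  have hf : fhit ι h a ≠ fhit ι h b := fun e => hne (fhit_inj hι hs e)
  rcases hf.lt_or_gt with hl | hl
  · exact absurd hab (rk_strict ι h hl).ne
  · exact absurd hab.symm (rk_strict ι h hl).ne

theorem rk_comp {C γ δ : Type*} [Fintype γ] [Fintype δ] (ι : C → ℕ) (w : C → γ)
    (p : γ ≃ δ) (m : δ) : rk ι (⇑p ∘ w) m = rk ι w (p.symm m) := by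
  unfold rk
  simp only [fhit_comp]
  exact Finset.card_equiv p.symm (fun i => by simp)

/-- The dual small Ramsey degree of a finite metric space `M` with `n` points,
with respect to non-expansive surjections, is at least `n!`. -/
theorem stmt_1 (M : Type) [MetricSpace M] [Fintype M] [Nonempty M]
    (n : ℕ) (hn : Fintype.card M = n) :
    ∃ k : ℕ, 1 ≤ k ∧ ∃ (B : Type) (mB : MetricSpace B), Finite B ∧ Nonempty B ∧
      @LowerOsc B M mB _ k (Nat.factorial n) := by
  classical
  have hn1 : 1 ≤ n := hn ▸ Fintype.card_pos
  haveI : NeZero n := ⟨by omega⟩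
  set D : ℝ := Metric.diam (Set.univ : Set M) + 1 with hD
  have hD0 : 0 < D := by
    have := Metric.diam_nonneg (s := (Set.univ : Set M))
    linarith
  have hdistD : ∀ x y : M, dist x y ≤ D := by
    intro x y
    have hb : Bornology.IsBounded (Set.univ : Set M) := isCompact_univ.isBounded
    have := Metric.dist_le_diam_of_mem hb (Set.mem_univ x) (Set.mem_univ y)
    linarith
  refine ⟨Fintype.card (M → Fin n), Fintype.card_pos, Fin n, flatMetric n D hD0,
    Finite.of_fintype _, ⟨0⟩, ?_⟩
  letI mB := flatMetric n D hD0
  intro C _ _ _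
  letI : Fintype C := Fintype.ofFinite C
  set ι : C → ℕ := fun c => (Fintype.equivFin C c : ℕ) with hιdef
  have hι : Function.Injective ι := fun a b hab =>
    (Fintype.equivFin C).injective (Fin.val_injective hab)
  set enc := Fintype.equivFin (M → Fin n) with henc
  refine ⟨fun g => enc (fun m => ⟨rk ι g.1 m, hn ▸ rk_lt ι g.1 m⟩), ?_⟩
  intro w hw
  -- non-expansiveness of any bijection p : Fin n → M
  have hNEp : ∀ p : Fin n ≃ M, IsNESurj (⇑p : Fin n → M) := by
    intro p
    refine ⟨p.surjective, fun x y => ?_⟩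
    by_cases hxy : x = y
    · simp [hxy]
    · have : dist x y = D := by
        show (if x = y then (0:ℝ) else D) = D
        rw [if_neg hxy]
      rw [this]
      exact hdistD _ _
  have hcomp : ∀ p : Fin n ≃ M, IsNESurj ((⇑p ∘ w : C → M)) := by
    intro p
    refine ⟨(p.surjective).comp hw.1, fun x y => ?_⟩
    calc dist (p (w x)) (p (w y)) ≤ dist (w x) (w y) := (hNEp p).2 _ _
      _ ≤ dist x y := hw.2 x y
  set S := {c : Fin (Fintype.card (M → Fin n)) | ∃ g : {f : C → M // IsNESurj f},
      (∃ f : Fin n → M, IsNESurj f ∧ g.1 = f ∘ w) ∧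
        enc (fun m => ⟨rk ι g.1 m, hn ▸ rk_lt ι g.1 m⟩) = c} with hS
  have hmem : ∀ p : Fin n ≃ M,
      enc (fun m => ⟨rk ι (⇑p ∘ w) m, hn ▸ rk_lt ι (⇑p ∘ w) m⟩) ∈ S := by
    intro p
    exact ⟨⟨⇑p ∘ w, hcomp p⟩, ⟨⇑p, hNEp p, rfl⟩, rfl⟩
  set Φ : (Fin n ≃ M) → S := fun p =>
    ⟨enc (fun m => ⟨rk ι (⇑p ∘ w) m, hn ▸ rk_lt ι (⇑p ∘ w) m⟩), hmem p⟩ with hΦ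
  have hΦinj : Function.Injective Φ := by
    intro p q hpq
    have h1 : (fun m => (⟨rk ι (⇑p ∘ w) m, hn ▸ rk_lt ι (⇑p ∘ w) m⟩ : Fin n)) =
        fun m => ⟨rk ι (⇑q ∘ w) m, hn ▸ rk_lt ι (⇑q ∘ w) m⟩ :=
      enc.injective (Subtype.ext_iff.mp hpq)
    have h2 : ∀ m, rk ι w (p.symm m) = rk ι w (q.symm m) := by
      intro m
      have := congrFun h1 m
      have h3 : rk ι (⇑p ∘ w) m = rk ι (⇑q ∘ w) m := Fin.mk.inj_iff.mp this
      rwa [rk_comp, rk_comp] at h3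
    have hrkinj : Function.Injective (rk ι w) := rk_inj hι hw.1
    have hsymm : ∀ m, p.symm m = q.symm m := fun m => hrkinj (h2 m)
    ext j
    have := hsymm (p j)
    rw [Equiv.symm_apply_apply] at this
    have h4 := congrArg q this
    rw [Equiv.apply_symm_apply] at h4
    exact h4.symm
  have hcard : Nat.card (Fin n ≃ M) ≤ Nat.card S :=
    Nat.card_le_card_of_injective Φ hΦinj
  have hfact : Nat.card (Fin n ≃ M) = Nat.factorial n := by
    rw [Nat.card_eq_fintype_card, Fintype.card_equiv (Fintype.equivFinOfCardEq hn).symm,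
      Fintype.card_fin]
  rw [← Nat.card_coe_set_eq] at *
  rw [hfact] at hcard
  exact hcard
end

section
/- For every nonempty countable (finite or countably infinite) metric space (M, d) there exists a surjective map q : ℕ → M such that d(q x, q y) ≤ max{x, y} for all x ≠ y in ℕ. (That is, the metric space Ω is projectively universal for all finite and countably infinite metric spaces: every such space is the image of Ω under a non-expansive surjection.) -/
/-- Every nonempty countable metric space is the image of the metric space
`Ω = (ℕ, d_ω)` (where `d_ω(x,y) = max{x,y}` for `x ≠ y`) under a non-expansive
surjection: there is a surjection `q : ℕ → M` with `d(q x, q y) ≤ max{x,y}`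
for all `x ≠ y`. -/
theorem stmt_2 (M : Type) [MetricSpace M] [Countable M] [Nonempty M] :
    ∃ q : ℕ → M, Function.Surjective q ∧
      ∀ x y : ℕ, x ≠ y → dist (q x) (q y) ≤ ((max x y : ℕ) : ℝ) := by
  classical
  obtain ⟨f, hf⟩ := exists_surjective_nat M
  obtain ⟨a⟩ := ‹Nonempty M›
  set q : ℕ → M := fun n =>
    if 2 * dist (f n.unpair.1) a ≤ (n : ℝ) then f n.unpair.1 else a with hq
  refine ⟨q, ?_, ?_⟩
  · intro m
    obtain ⟨k, hk⟩ := hf m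
    obtain ⟨j, hj⟩ := exists_nat_ge (2 * dist (f k) a)
    refine ⟨Nat.pair k j, ?_⟩
    have h1 : (Nat.pair k j).unpair.1 = k := by simp [Nat.unpair_pair]
    have h2 : 2 * dist (f (Nat.pair k j).unpair.1) a ≤ ((Nat.pair k j : ℕ) : ℝ) := by
      rw [h1]
      calc 2 * dist (f k) a ≤ (j : ℝ) := hj
        _ ≤ (Nat.pair k j : ℕ) := by exact_mod_cast Nat.right_le_pair k j
    simp only [hq, if_pos h2, h1, hk]
  · intro x y hxy
    have key : ∀ n : ℕ, dist (q n) a ≤ (n : ℝ) / 2 := by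
      intro n
      by_cases h : 2 * dist (f n.unpair.1) a ≤ (n : ℝ)
      · simp only [hq, if_pos h]
        linarith
      · simp only [hq, if_neg h, dist_self]
        positivity
    calc dist (q x) (q y) ≤ dist (q x) a + dist a (q y) := dist_triangle _ _ _
      _ ≤ (x : ℝ) / 2 + (y : ℝ) / 2 := by
          have := key x
          have := key y
          rw [dist_comm a (q y)]
          linarith
      _ ≤ ((max x y : ℕ) : ℝ) := by
          have hx : (x : ℝ) ≤ ((max x y : ℕ) : ℝ) := by
            exact_mod_cast le_max_left x y
          have hy : (y : ℝ) ≤ ((max x y : ℕ) : ℝ) := by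
            exact_mod_cast le_max_right x y
          linarith
end

section
/- Let (U, d_U) be a nonempty countable metric space such that for every finite nonempty metric space A there exists a non-expansive surjection from U onto A. Then there exists a surjective map q : U → ℕ such that max{q x, q y} ≤ d_U(x, y) whenever q x ≠ q y; that is, there exists a non-expansive surjection from U onto Ω. (Consequently a countable metric space is projectively universal for all finite metric spaces if and only if it is bi-projectible with Ω.) -/
/-! Call `x, y` `r`-chained if they are joined by a chain of steps of length `< r`. A non-expansive
map `f` onto `Ω_N = {0, …, N}` is constant along `n`-chains starting in a fibre over a value `≥ n`,
since distinct values there are at distance `≥ n`. For `N = n + |s|` some value in `[n, N]` is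
missed by `f(s)`, so some point is `n`-chained to no point of the finite set `s`. Greedily this
gives `X 0, X 1, …` with `X n` not `n`-chained to any earlier `X m`. Then each `x` is `n`-chained
to `X n` for at most one `n`, and `q x := n` (or `0` if there is none) works: if `q x < q y = m`
and `d(x, y) < m`, then `x` would be `m`-chained to `X m`. -/

open Finset

theorem exists_seq_forall_lt_of_forall_finset {α : Type*} (r : ℕ → α → α → Prop)
    (h : ∀ (n : ℕ) (s : Finset α), ∃ y, ∀ x ∈ s, r n x y) :
    ∃ f : ℕ → α, ∀ m n, m < n → r n (f m) (f n) := by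
  classical
  choose g hg using h
  let S : ℕ → Finset α := fun n => Nat.rec ∅ (fun k s => insert (g k s) s) n
  have mem_S : ∀ m n, m < n → g m (S m) ∈ S n := by
    intro m n hmn
    induction n with
    | zero => omega
    | succ n ih =>
      rcases Nat.lt_succ_iff_lt_or_eq.mp hmn with hlt | rfl
      · exact mem_insert_of_mem (ih hlt)
      · exact mem_insert_self _ _
  exact ⟨fun n => g n (S n), fun m n hmn => hg n (S n) _ (mem_S m n hmn)⟩

def omegaNatDist (i j : ℕ) : ℕ := if i = j then 0 else max i j

theorem omegaNatDist_triangle (i j k : ℕ) :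
    omegaNatDist i k ≤ omegaNatDist i j + omegaNatDist j k := by
  unfold omegaNatDist; split_ifs <;> omega

theorem omegaNatDist_eq_zero_iff {i j : ℕ} : omegaNatDist i j = 0 ↔ i = j := by
  unfold omegaNatDist; split_ifs <;> omega

/-- The subspace `{0, …, N}` of `Ω`. -/
def FinOmega (N : ℕ) : Type := Fin (N + 1)

namespace FinOmega

variable {N : ℕ}

def val (i : FinOmega N) : ℕ := Fin.val (n := N + 1) i

def mk (k : ℕ) (hk : k ≤ N) : FinOmega N := (⟨k, Nat.lt_succ_of_le hk⟩ : Fin (N + 1))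

@[simp] theorem val_mk (k : ℕ) (hk : k ≤ N) : (mk k hk).val = k := rfl

theorem val_injective : Function.Injective (val (N := N)) := Fin.val_injective

instance : Fintype (FinOmega N) := inferInstanceAs (Fintype (Fin (N + 1)))
instance : Nonempty (FinOmega N) := inferInstanceAs (Nonempty (Fin (N + 1)))

noncomputable instance : MetricSpace (FinOmega N) where
  dist i j := omegaNatDist i.val j.val
  dist_self i := by simp [omegaNatDist]
  dist_comm i j := by unfold omegaNatDist; split_ifs <;> grind
  dist_triangle i j k := by exact_mod_cast omegaNatDist_triangle _ _ _
  eq_of_dist_eq_zero h := val_injective (omegaNatDist_eq_zero_iff.mp (by exact_mod_cast h))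

theorem dist_eq_of_ne {i j : FinOmega N} (h : i ≠ j) : dist i j = max i.val j.val := by
  change ((omegaNatDist i.val j.val : ℕ) : ℝ) = _
  rw [omegaNatDist, if_neg (val_injective.ne h), Nat.cast_max]

end FinOmega

section Chain

variable {U : Type*} [PseudoMetricSpace U]

def ChainRel (r : ℝ) : U → U → Prop := Relation.ReflTransGen fun a b => dist a b < r

namespace ChainRel

variable {r : ℝ} {x y z : U}

theorem refl (r : ℝ) (x : U) : ChainRel r x x := Relation.ReflTransGen.refl

theorem of_dist_lt (h : dist x y < r) : ChainRel r x y := Relation.ReflTransGen.single h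

theorem trans (hxy : ChainRel r x y) (hyz : ChainRel r y z) : ChainRel r x z :=
  Relation.ReflTransGen.trans hxy hyz

theorem symm (h : ChainRel r x y) : ChainRel r y x :=
  have : Std.Symm fun a b : U => dist a b < r := ⟨fun a b hab => by rwa [dist_comm]⟩
  Std.Symm.symm (r := Relation.ReflTransGen fun a b : U => dist a b < r) _ _ h

theorem mono {s : ℝ} (hrs : r ≤ s) (h : ChainRel r x y) : ChainRel s x y :=
  Relation.ReflTransGen.mono (fun _ _ (hab : dist _ _ < r) => hab.trans_le hrs) _ _ h

end ChainRel

theorem FinOmega.apply_eq_of_chainRel {N n : ℕ} {f : U → FinOmega N}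
    (hf : ∀ x y, dist (f x) (f y) ≤ dist x y) {x y : U} (hx : n ≤ (f x).val)
    (h : ChainRel n x y) : f y = f x := by
  induction h with
  | refl => rfl
  | @tail b c _ hstep ih =>
    by_contra hne
    have hbc := hf b c
    rw [FinOmega.dist_eq_of_ne (ih ▸ Ne.symm hne : f b ≠ f c), ih] at hbc
    have : (n : ℝ) ≤ max (f x).val (f c).val := by exact_mod_cast le_max_of_le_left hx
    linarith [show dist b c < n from hstep]

theorem exists_forall_not_chainRel
    (h : ∀ N : ℕ, ∃ f : U → FinOmega N,
      Function.Surjective f ∧ ∀ x y, dist (f x) (f y) ≤ dist x y)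
    (n : ℕ) (s : Finset U) : ∃ x, ∀ y ∈ s, ¬ ChainRel n y x := by
  classical
  obtain ⟨f, hsurj, hf⟩ := h (n + #s)
  obtain ⟨k, hk, hks⟩ : ∃ k ∈ Icc n (n + #s), k ∉ s.image fun y => (f y).val := by
    refine exists_mem_notMem_of_card_lt_card ?_
    calc #(s.image fun y => (f y).val) ≤ #s := card_image_le
      _ < #(Icc n (n + #s)) := by simp only [Nat.card_Icc]; omega
  obtain ⟨x, hx⟩ := hsurj (FinOmega.mk k (mem_Icc.1 hk).2)
  have hfx : (f x).val = k := by rw [hx, FinOmega.val_mk]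
  refine ⟨x, fun y hy hyx => hks (mem_image.2 ⟨y, hy, ?_⟩)⟩
  rw [FinOmega.apply_eq_of_chainRel hf (hfx ▸ (mem_Icc.1 hk).1) hyx.symm, hfx]

end Chain

section ChainIndex

variable {U : Type*} [PseudoMetricSpace U] {X : ℕ → U}

def ChainSeparated (X : ℕ → U) : Prop := ∀ m n : ℕ, m < n → ¬ ChainRel n (X m) (X n)

theorem ChainSeparated.eq_of_chainRel (hX : ChainSeparated X) {x : U} {m n : ℕ}
    (hm : ChainRel m x (X m)) (hn : ChainRel n x (X n)) : m = n := by
  wlog hmn : m ≤ n generalizing m n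
  · exact (this hn hm (by omega)).symm
  rcases hmn.lt_or_eq with hlt | rfl
  · exact absurd ((hm.symm.mono (by exact_mod_cast hlt.le)).trans hn) (hX m n hlt)
  · rfl

open Classical in
noncomputable def chainIndex (X : ℕ → U) (x : U) : ℕ :=
  if h : ∃ n : ℕ, ChainRel n x (X n) then h.choose else 0

theorem chainIndex_eq (hX : ChainSeparated X) {x : U} {n : ℕ}
    (h : ChainRel n x (X n)) : chainIndex X x = n := by
  have hex : ∃ n : ℕ, ChainRel n x (X n) := ⟨n, h⟩
  rw [chainIndex, dif_pos hex]
  exact hX.eq_of_chainRel hex.choose_spec h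

theorem chainRel_chainIndex {x : U} (hx : chainIndex X x ≠ 0) :
    ChainRel (chainIndex X x) x (X (chainIndex X x)) := by
  by_cases hex : ∃ n : ℕ, ChainRel n x (X n)
  · simp only [chainIndex, dif_pos hex]
    exact hex.choose_spec
  · simp [chainIndex, dif_neg hex] at hx

theorem chainIndex_surjective (hX : ChainSeparated X) :
    Function.Surjective (chainIndex X) :=
  fun n => ⟨X n, chainIndex_eq hX (.refl _ _)⟩

theorem chainIndex_le_dist (hX : ChainSeparated X) {x y : U}
    (hlt : chainIndex X x < chainIndex X y) : (chainIndex X y : ℝ) ≤ dist x y := by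
  by_contra! hd
  have := chainIndex_eq hX ((ChainRel.of_dist_lt hd).trans (chainRel_chainIndex (by omega)))
  omega

theorem max_chainIndex_le_dist (hX : ChainSeparated X) {x y : U}
    (hxy : chainIndex X x ≠ chainIndex X y) :
    ((max (chainIndex X x) (chainIndex X y) : ℕ) : ℝ) ≤ dist x y := by
  rcases hxy.lt_or_gt with hlt | hlt
  · rw [max_eq_right hlt.le]
    exact chainIndex_le_dist hX hlt
  · rw [max_eq_left hlt.le, dist_comm]
    exact chainIndex_le_dist hX hlt

end ChainIndex

theorem stmt_3_general (U : Type) [MetricSpace U]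
    (h : ∀ (A : Type) [MetricSpace A] [Fintype A] [Nonempty A],
      ∃ f : U → A, Function.Surjective f ∧ ∀ x y : U, dist (f x) (f y) ≤ dist x y) :
    ∃ q : U → ℕ, Function.Surjective q ∧
      ∀ x y : U, q x ≠ q y → ((max (q x) (q y) : ℕ) : ℝ) ≤ dist x y := by
  obtain ⟨X, hX⟩ := exists_seq_forall_lt_of_forall_finset (fun n x y => ¬ ChainRel n x y)
    (exists_forall_not_chainRel fun N => h (FinOmega N))
  exact ⟨chainIndex X, chainIndex_surjective hX, fun _ _ => max_chainIndex_le_dist hX⟩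

/-- If a nonempty countable metric space `U` admits a non-expansive surjection onto
every finite nonempty metric space, then it admits a non-expansive surjection onto
the metric space `Ω = (ℕ, d_ω)` (where `d_ω(x,y) = max{x,y}` for `x ≠ y`). -/
theorem stmt_3 (U : Type) [MetricSpace U] [Countable U] [Nonempty U]
    (h : ∀ (A : Type) [MetricSpace A] [Fintype A] [Nonempty A],
      ∃ f : U → A, Function.Surjective f ∧ ∀ x y : U, dist (f x) (f y) ≤ dist x y) :
    ∃ q : U → ℕ, Function.Surjective q ∧
      ∀ x y : U, q x ≠ q y → ((max (q x) (q y) : ℕ) : ℝ) ≤ dist x y :=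
  stmt_3_general U h
end

section
/- Let q : ℕ → ℕ be a surjection satisfying max{q x, q y} ≤ max{x, y} whenever q x ≠ q y (i.e., a non-expansive surjection Ω → Ω), and define the linear order ⊑ on ℕ by a ⊑ b iff min q⁻¹(a) ≤ min q⁻¹(b) (this is the unique linear order on ℕ making q a rigid surjection from (ℕ, ≤) onto (ℕ, ⊑)). Then there exists a map r : ℕ → ℕ that is simultaneously a non-expansive surjection Ω → Ω and a rigid surjection from (ℕ, ⊑) onto (ℕ, ≤). (That is, Ω^< is dually self-similar with respect to the order-forgetting expansion.) -/
namespace Stmt5Aux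

variable (q : ℕ → ℕ)

noncomputable def mmin (a : ℕ) : ℕ := sInf {z : ℕ | q z = a}

def pset : ℕ → Prop := fun n => n ∈ Set.range (mmin q)

noncomputable def eenum (i : ℕ) : ℕ :=
  Function.invFun (mmin q) (Nat.nth (pset q) i)

noncomputable def tctr : ℕ → ℕ
  | 0 => 0
  | i + 1 => if tctr i ≤ eenum q i then tctr i + 1 else tctr i

noncomputable def rho (a : ℕ) : ℕ :=
  @Nat.count (pset q) (Classical.decPred _) (mmin q a)

noncomputable def rmap (a : ℕ) : ℕ :=
  if tctr q (rho q a) ≤ a then tctr q (rho q a) else 0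

variable (hq : Function.Surjective q)
include hq

theorem mmin_spec (a : ℕ) : q (mmin q a) = a := by
  have : ({z : ℕ | q z = a}).Nonempty := hq a
  exact Nat.sInf_mem this

theorem mmin_inj : Function.Injective (mmin q) := by
  intro a b h
  have := mmin_spec q hq a
  rw [h, mmin_spec q hq b] at this
  exact this.symm

theorem pset_infinite : (setOf (pset q)).Infinite := by
  have : setOf (pset q) = Set.range (mmin q) := rfl
  rw [this]
  exact Set.infinite_range_of_injective (mmin_inj q hq)

theorem mmin_eenum (i : ℕ) : mmin q (eenum q i) = Nat.nth (pset q) i := by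
  have h : Nat.nth (pset q) i ∈ Set.range (mmin q) :=
    Nat.nth_mem_of_infinite (pset_infinite q hq) i
  exact Function.invFun_eq h

theorem rho_eenum (i : ℕ) : rho q (eenum q i) = i := by
  unfold rho
  rw [mmin_eenum q hq]
  exact @Nat.count_nth_of_infinite _ (Classical.decPred _) (pset_infinite q hq) i

theorem eenum_rho (a : ℕ) : eenum q (rho q a) = a := by
  have h : pset q (mmin q a) := ⟨a, rfl⟩
  unfold eenum rho
  rw [@Nat.nth_count _ (Classical.decPred _) _ h]
  exact Function.leftInverse_invFun (mmin_inj q hq) a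

omit hq

theorem tctr_succ_of_step {i : ℕ} (h : tctr q i ≤ eenum q i) :
    tctr q (i + 1) = tctr q i + 1 := by
  simp only [tctr, if_pos h]

theorem tctr_succ_of_not_step {i : ℕ} (h : ¬ tctr q i ≤ eenum q i) :
    tctr q (i + 1) = tctr q i := by
  simp only [tctr, if_neg h]

theorem tctr_mono : Monotone (tctr q) := by
  apply monotone_nat_of_le_succ
  intro i
  by_cases h : tctr q i ≤ eenum q i <;> simp [tctr, h]

include hq

/-- There is a "step" at some `j ≥ i`. -/
theorem step_exists (i : ℕ) : ∃ j, i ≤ j ∧ tctr q j ≤ eenum q j := by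
  by_contra h
  push_neg at h
  -- t is constant ≥ i
  have hconst : ∀ j, i ≤ j → tctr q j = tctr q i := by
    intro j hj
    induction j with
    | zero => rw [Nat.le_zero.mp hj]
    | succ k ih =>
      rcases Nat.lt_or_ge i (k+1) with hik | hik
      · have hik' : i ≤ k := by omega
        have hns : ¬ tctr q k ≤ eenum q k := not_le_of_gt (h k hik')
        rw [tctr_succ_of_not_step q hns]
        exact ih hik'
      · have : i = k + 1 := le_antisymm hj hik
        rw [this]
  set T := tctr q i with hT
  -- eenum maps Icc i (i+T) injectively into range T
  have hinj : Function.Injective (eenum q) := by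
    intro a b hab
    have := congrArg (rho q) hab
    rwa [rho_eenum q hq, rho_eenum q hq] at this
  have hmaps : ∀ j ∈ Finset.Icc i (i + T), eenum q j ∈ Finset.range T := by
    intro j hj
    simp only [Finset.mem_Icc] at hj
    simp only [Finset.mem_range]
    have := h j hj.1
    rw [hconst j hj.1] at this
    exact this
  have hcard := Finset.card_le_card_of_injOn _ hmaps (Function.Injective.injOn hinj)
  simp [Nat.card_Icc] at hcard
  omega

/-- A step at index `j ≥ i` with `tctr q j = tctr q i`. -/
theorem step_exists' (i : ℕ) : ∃ j, i ≤ j ∧ tctr q j = tctr q i ∧ tctr q j ≤ eenum q j := by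
  classical
  have hex := step_exists q hq i
  set P : ℕ → Prop := fun j => i ≤ j ∧ tctr q j ≤ eenum q j with hP
  have hex' : ∃ j, P j := hex
  let j := Nat.find hex'
  have hj : P j := Nat.find_spec hex'
  refine ⟨j, hj.1, ?_, hj.2⟩
  -- t is constant on [i, j]
  have : ∀ k, i ≤ k → k ≤ j → tctr q k = tctr q i := by
    intro k hk hkj
    induction k with
    | zero => rw [Nat.le_zero.mp hk]
    | succ l ih =>
      rcases Nat.lt_or_ge i (l+1) with hik | hik
      · have hil : i ≤ l := by omega
        have hlj : l < j := by omega
        have hnl : ¬ P l := Nat.find_min hex' hlj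
        have hns : ¬ tctr q l ≤ eenum q l := fun hc => hnl ⟨hil, hc⟩
        rw [tctr_succ_of_not_step q hns]
        exact ih hil (by omega)
      · have : i = l + 1 := le_antisymm hk hik
        rw [this]
  exact this j hj.1 le_rfl

/-- Every value is attained by the counter at a step. -/
theorem hit (v : ℕ) : ∃ i, tctr q i = v ∧ tctr q i ≤ eenum q i := by
  induction v with
  | zero =>
    obtain ⟨j, _, hj0, hjs⟩ := step_exists' q hq 0
    exact ⟨j, by simpa [tctr] using hj0, hjs⟩
  | succ w ih =>
    obtain ⟨i, hiv, his⟩ := ih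
    have hsucc : tctr q (i + 1) = w + 1 := by
      rw [tctr_succ_of_step q his, hiv]
    obtain ⟨j, _, hj, hjs⟩ := step_exists' q hq (i + 1)
    exact ⟨j, by rw [hj, hsucc], hjs⟩

/-- The step index for a given value is unique. -/
theorem step_unique {i j : ℕ} (hi : tctr q i ≤ eenum q i) (hj : tctr q j ≤ eenum q j)
    (hij : tctr q i = tctr q j) : i = j := by
  by_contra hne
  rcases Nat.lt_or_ge i j with h | h
  · have : tctr q (i + 1) ≤ tctr q j := tctr_mono q (by omega)
    rw [tctr_succ_of_step q hi] at this
    omega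
  · have h' : j < i := by omega
    have : tctr q (j + 1) ≤ tctr q i := tctr_mono q (by omega)
    rw [tctr_succ_of_step q hj] at this
    omega

theorem rmap_eenum (i : ℕ) :
    rmap q (eenum q i) = if tctr q i ≤ eenum q i then tctr q i else 0 := by
  unfold rmap
  rw [rho_eenum q hq]

theorem rmap_le (a : ℕ) : rmap q a ≤ a := by
  unfold rmap
  split <;> omega

end Stmt5Aux

open Stmt5Aux


/-- `Ω^<` is dually self-similar with respect to the order-forgetting expansion:
given a non-expansive surjection `q : Ω → Ω`, with `⊑` the unique linear order on `ℕ`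
making `q` a rigid surjection `(ℕ, ≤) → (ℕ, ⊑)` (namely `a ⊑ b ↔ min q⁻¹(a) ≤ min q⁻¹(b)`),
there is a map `r : ℕ → ℕ` which is simultaneously a non-expansive surjection `Ω → Ω`
and a rigid surjection from `(ℕ, ⊑)` onto `(ℕ, ≤)`. -/
theorem stmt_5 (q : ℕ → ℕ) (hq : Function.Surjective q)
    (hne : ∀ x y : ℕ, q x ≠ q y → max (q x) (q y) ≤ max x y) :
    ∃ r : ℕ → ℕ, Function.Surjective r ∧
      (∀ x y : ℕ, r x ≠ r y → max (r x) (r y) ≤ max x y) ∧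
      -- `r` is a rigid surjection from `(ℕ, ⊑)` onto `(ℕ, ≤)`: for `b₁ < b₂`, the
      -- `⊑`-least element `m₁` of `r⁻¹(b₁)` is strictly `⊑`-below the `⊑`-least
      -- element `m₂` of `r⁻¹(b₂)`, where `a ⊑ b ↔ sInf q⁻¹(a) ≤ sInf q⁻¹(b)`.
      ∀ b₁ b₂ : ℕ, b₁ < b₂ →
        ∃ m₁ m₂ : ℕ, r m₁ = b₁ ∧ r m₂ = b₂ ∧
          (∀ x : ℕ, r x = b₁ → sInf {z : ℕ | q z = m₁} ≤ sInf {z : ℕ | q z = x}) ∧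
          (∀ x : ℕ, r x = b₂ → sInf {z : ℕ | q z = m₂} ≤ sInf {z : ℕ | q z = x}) ∧
          sInf {z : ℕ | q z = m₁} < sInf {z : ℕ | q z = m₂} := by
  refine ⟨rmap q, ?_, ?_, ?_⟩
  · -- surjective
    intro v
    obtain ⟨i, hiv, his⟩ := hit q hq v
    exact ⟨eenum q i, by rw [rmap_eenum q hq, if_pos his, hiv]⟩
  · intro x y _
    exact max_le_max (rmap_le q hq x) (rmap_le q hq y)
  · intro b₁ b₂ hb
    obtain ⟨i₁, hi₁v, hi₁s⟩ := hit q hq b₁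
    obtain ⟨i₂, hi₂v, hi₂s⟩ := hit q hq b₂
    have hii : i₁ < i₂ := by
      by_contra h
      have : tctr q i₂ ≤ tctr q i₁ := tctr_mono q (by omega)
      omega
    refine ⟨eenum q i₁, eenum q i₂, ?_, ?_, ?_, ?_, ?_⟩
    · rw [rmap_eenum q hq, if_pos hi₁s, hi₁v]
    · rw [rmap_eenum q hq, if_pos hi₂s, hi₂v]
    · -- minimality for b₁
      intro x hx
      have hx' : x = eenum q (rho q x) := (eenum_rho q hq x).symm
      set j := rho q x
      rw [hx', rmap_eenum q hq] at hx
      show mmin q (eenum q i₁) ≤ mmin q x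
      rw [hx', mmin_eenum q hq, mmin_eenum q hq]
      apply (Nat.nth_monotone (pset_infinite q hq))
      by_cases hs : tctr q j ≤ eenum q j
      · rw [if_pos hs] at hx
        have := step_unique q hq hi₁s hs (by omega)
        omega
      · rw [if_neg hs] at hx
        -- b₁ = 0
        subst hx
        by_contra h
        have hj : j < i₁ := by omega
        have : tctr q j ≤ tctr q i₁ := tctr_mono q (by omega)
        have h0 : tctr q j = 0 := by omega
        exact hs (by omega)
    · intro x hx
      have hx' : x = eenum q (rho q x) := (eenum_rho q hq x).symm
      set j := rho q x
      rw [hx', rmap_eenum q hq] at hx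
      show mmin q (eenum q i₂) ≤ mmin q x
      rw [hx', mmin_eenum q hq, mmin_eenum q hq]
      apply (Nat.nth_monotone (pset_infinite q hq))
      by_cases hs : tctr q j ≤ eenum q j
      · rw [if_pos hs] at hx
        have := step_unique q hq hi₂s hs (by omega)
        omega
      · rw [if_neg hs] at hx
        omega
    · show mmin q (eenum q i₁) < mmin q (eenum q i₂)
      rw [mmin_eenum q hq, mmin_eenum q hq]
      exact Nat.nth_strictMono (pset_infinite q hq) hii
end

section
/- Let M be a finite nonempty metric space with n points. There exist k ≥ 1 and a coloring χ : NESurj(Ω, M) → Fin k, each of whose color classes is a Borel subset of the product space M^ℕ (M taken discrete, M^ℕ with the product topology), such that for every non-expansive surjection w : Ω → Ω the set {χ(f ∘ w) : f ∈ NESurj(Ω, M)} has at least n! elements. (Together with the matching upper bound, the dual big Ramsey degree of M in Ω with respect to non-expansive surjections and Borel colorings equals |M|!; by bi-projectibility the same value holds in any countable projectively universal metric space.) -/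
/-- A non-expansive surjection from `Ω = (ℕ, d_ω)` (where `d_ω(x,y) = max{x,y}`
for `x ≠ y`) onto a metric space `M`. -/
def IsOmegaNESurj {M : Type*} [MetricSpace M] (f : ℕ → M) : Prop :=
  Function.Surjective f ∧ ∀ x y : ℕ, x ≠ y → dist (f x) (f y) ≤ ((max x y : ℕ) : ℝ)

/-- A non-expansive surjection `Ω → Ω`. -/
def IsOmegaNESurjSelf (w : ℕ → ℕ) : Prop :=
  Function.Surjective w ∧ ∀ x y : ℕ, w x ≠ w y → max (w x) (w y) ≤ max x y

open Classical in
/-- The "order of first occurrences" color matrix of `f : ℕ → M`. -/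
noncomputable def dbrColor {M : Type} (f : ℕ → M) : M → M → Bool :=
  fun a b => decide (sInf {x | f x = a} ≤ sInf {x | f x = b})

lemma dbrOccMeas {M : Type} [MetricSpace M] [Fintype M] :
    ∀ (m : M) (s : ℕ),
      @MeasurableSet _ (borel (ℕ → M)) {f : ℕ → M | sInf {x | f x = m} = s} := by
  letI : MeasurableSpace (ℕ → M) := borel (ℕ → M)
  haveI : BorelSpace (ℕ → M) := ⟨rfl⟩
  have hsingle : ∀ (x : ℕ) (m : M), MeasurableSet {f : ℕ → M | f x = m} := by
    intro x m
    exact (isClosed_eq (continuous_apply x) continuous_const).measurableSet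
  intro m s
  match s with
  | 0 =>
    have he : {f : ℕ → M | sInf {x | f x = m} = 0}
        = {f | f 0 = m} ∪ ⋂ x, {f : ℕ → M | f x = m}ᶜ := by
      ext f
      simp only [Set.mem_setOf_eq, Set.mem_union, Set.mem_iInter, Set.mem_compl_iff,
        Nat.sInf_eq_zero]
      constructor
      · rintro (h | h)
        · exact Or.inl h
        · exact Or.inr fun x hx => (Set.eq_empty_iff_forall_notMem.1 h x) hx
      · rintro (h | h)
        · exact Or.inl h
        · exact Or.inr (Set.eq_empty_iff_forall_notMem.2 h)
    rw [he]
    exact (hsingle 0 m).union (MeasurableSet.iInter fun x => (hsingle x m).compl)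
  | (s + 1) =>
    have he : {f : ℕ → M | sInf {x | f x = m} = s + 1}
        = {f | f (s+1) = m} ∩ ⋂ (x : ℕ), ⋂ (_ : x < s + 1), {f : ℕ → M | f x = m}ᶜ := by
      ext f
      simp only [Set.mem_setOf_eq, Set.mem_inter_iff, Set.mem_iInter, Set.mem_compl_iff]
      constructor
      · intro h
        have hne : {x | f x = m}.Nonempty := by
          by_contra hemp
          rw [Set.not_nonempty_iff_eq_empty] at hemp
          rw [hemp, Nat.sInf_empty] at h
          exact Nat.succ_ne_zero s h.symm
        have h1 := Nat.sInf_mem hne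
        rw [h] at h1
        refine ⟨h1, fun x hx => ?_⟩
        exact Nat.notMem_of_lt_sInf (h ▸ hx)
      · rintro ⟨h1, h2⟩
        refine le_antisymm (Nat.sInf_le h1) ?_
        by_contra hlt
        push_neg at hlt
        have hmem := Nat.sInf_mem (⟨s + 1, h1⟩ : Set.Nonempty {x | f x = m})
        exact h2 _ hlt hmem
    rw [he]
    exact (hsingle (s+1) m).inter
      (MeasurableSet.iInter fun x => MeasurableSet.iInter fun _ => (hsingle x m).compl)

lemma dbrMeas {M : Type} [MetricSpace M] [Fintype M] (c : M → M → Bool) :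
    @MeasurableSet _ (borel (ℕ → M)) {f : ℕ → M | IsOmegaNESurj f ∧ dbrColor f = c} := by
  letI : MeasurableSpace (ℕ → M) := borel (ℕ → M)
  haveI : BorelSpace (ℕ → M) := ⟨rfl⟩
  have hsingle : ∀ (x : ℕ) (m : M), MeasurableSet {f : ℕ → M | f x = m} := by
    intro x m
    exact (isClosed_eq (continuous_apply x) continuous_const).measurableSet
  have hocc := dbrOccMeas (M := M)
  have hle : ∀ a b : M,
      MeasurableSet {f : ℕ → M | sInf {x | f x = a} ≤ sInf {x | f x = b}} := by
    intro a b
    have he : {f : ℕ → M | sInf {x | f x = a} ≤ sInf {x | f x = b}}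
        = ⋃ (s : ℕ), ({f : ℕ → M | sInf {x | f x = a} = s} ∩
            ⋃ (t : ℕ), ⋃ (_ : s ≤ t), {f : ℕ → M | sInf {x | f x = b} = t}) := by
      ext f
      simp only [Set.mem_setOf_eq, Set.mem_iUnion, Set.mem_inter_iff]
      constructor
      · intro h
        exact ⟨_, rfl, _, h, rfl⟩
      · rintro ⟨s, hs, t, hst, ht⟩
        rw [hs, ht]
        exact hst
    rw [he]
    exact MeasurableSet.iUnion fun s => (hocc a s).inter
      (MeasurableSet.iUnion fun t => MeasurableSet.iUnion fun _ => hocc b t)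
  have hIs : MeasurableSet {f : ℕ → M | IsOmegaNESurj f} := by
    have h1 : MeasurableSet {f : ℕ → M | Function.Surjective f} := by
      have he : {f : ℕ → M | Function.Surjective f} = ⋂ m, ⋃ x, {f : ℕ → M | f x = m} := by
        ext f
        simp only [Set.mem_setOf_eq, Set.mem_iInter, Set.mem_iUnion, Function.Surjective]
      rw [he]
      exact MeasurableSet.iInter fun m => MeasurableSet.iUnion fun x => hsingle x m
    have h2 : MeasurableSet {f : ℕ → M |
        ∀ x y : ℕ, x ≠ y → dist (f x) (f y) ≤ ((max x y : ℕ) : ℝ)} := by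
      have he : {f : ℕ → M | ∀ x y : ℕ, x ≠ y → dist (f x) (f y) ≤ ((max x y : ℕ) : ℝ)}
          = ⋂ (x : ℕ), ⋂ (y : ℕ),
            {f : ℕ → M | x ≠ y → dist (f x) (f y) ≤ ((max x y : ℕ) : ℝ)} := by
        ext f
        simp only [Set.mem_setOf_eq, Set.mem_iInter]
      rw [he]
      refine MeasurableSet.iInter fun x => MeasurableSet.iInter fun y => ?_
      by_cases hxy : x = y
      · have : {f : ℕ → M | x ≠ y → dist (f x) (f y) ≤ ((max x y : ℕ) : ℝ)} = Set.univ := by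
          ext f; simp [hxy]
        rw [this]; exact MeasurableSet.univ
      · have : {f : ℕ → M | x ≠ y → dist (f x) (f y) ≤ ((max x y : ℕ) : ℝ)}
            = {f : ℕ → M | dist (f x) (f y) ≤ ((max x y : ℕ) : ℝ)} := by
          ext f; simp [hxy]
        rw [this]
        exact (isClosed_le (Continuous.dist (continuous_apply x) (continuous_apply y))
          continuous_const).measurableSet
    have he : {f : ℕ → M | IsOmegaNESurj f} = {f : ℕ → M | Function.Surjective f} ∩
        {f : ℕ → M | ∀ x y : ℕ, x ≠ y → dist (f x) (f y) ≤ ((max x y : ℕ) : ℝ)} := rfl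
    rw [he]
    exact h1.inter h2
  have hcol : MeasurableSet {f : ℕ → M | dbrColor f = c} := by
    have he : {f : ℕ → M | dbrColor f = c}
        = ⋂ (a : M), ⋂ (b : M), {f : ℕ → M | dbrColor f a b = c a b} := by
      ext f
      simp only [Set.mem_setOf_eq, Set.mem_iInter, funext_iff]
    rw [he]
    refine MeasurableSet.iInter fun a => MeasurableSet.iInter fun b => ?_
    cases hc : c a b
    · have : {f : ℕ → M | dbrColor f a b = false}
          = {f : ℕ → M | sInf {x | f x = a} ≤ sInf {x | f x = b}}ᶜ := by
        ext f; simp [dbrColor]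
      rw [this]
      exact (hle a b).compl
    · have : {f : ℕ → M | dbrColor f a b = true}
          = {f : ℕ → M | sInf {x | f x = a} ≤ sInf {x | f x = b}} := by
        ext f; simp [dbrColor]
      rw [this]
      exact hle a b
  exact hIs.inter hcol

/-- Auxiliary recursively chosen sequence of values with increasing first occurrences. -/
noncomputable def dbrU (D : ℕ) (τ : ℕ → ℕ) (next : ∀ B t : ℕ, ∃ v, B ≤ v ∧ t < τ v)
    (u0 : ℕ) : ℕ → ℕ
  | 0 => u0
  | (i + 1) => Classical.choose (next (max D (dbrU D τ next u0 i + 1)) (τ (dbrU D τ next u0 i)))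

lemma dbrU_succ (D : ℕ) (τ : ℕ → ℕ) (next : ∀ B t : ℕ, ∃ v, B ≤ v ∧ t < τ v) (u0 i : ℕ) :
    max D (dbrU D τ next u0 i + 1) ≤ dbrU D τ next u0 (i + 1) ∧
      τ (dbrU D τ next u0 i) < τ (dbrU D τ next u0 (i + 1)) :=
  Classical.choose_spec (next (max D (dbrU D τ next u0 i + 1)) (τ (dbrU D τ next u0 i)))

/-- The dual big Ramsey degree of a finite metric space `M` with `n` points in `Ω`,
with respect to non-expansive surjections and Borel colorings, is at least `n!`:
there is a Borel coloring attaining at least `n!` colors on every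
`{f ∘ w : f ∈ NESurj(Ω, M)}` with `w ∈ NESurj(Ω, Ω)`. -/
theorem stmt_7 (M : Type) [MetricSpace M] [Fintype M] [Nonempty M]
    (n : ℕ) (hn : Fintype.card M = n) :
    ∃ k : ℕ, 1 ≤ k ∧
      ∃ χ : {f : ℕ → M // IsOmegaNESurj f} → Fin k,
        (∀ i : Fin k,
          @MeasurableSet _ (borel (ℕ → M)) (Subtype.val '' (χ ⁻¹' {i}))) ∧
        ∀ w : ℕ → ℕ, IsOmegaNESurjSelf w →
          Nat.factorial n ≤
            {c : Fin k | ∃ g : {f : ℕ → M // IsOmegaNESurj f},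
              (∃ f : ℕ → M, IsOmegaNESurj f ∧ g.1 = f ∘ w) ∧ χ g = c}.ncard := by
  classical
  set k : ℕ := Fintype.card (M → M → Bool) with hk
  have hk1 : 1 ≤ k := Fintype.card_pos
  set e : (M → M → Bool) ≃ Fin k := Fintype.equivFin (M → M → Bool) with he
  set χ : {f : ℕ → M // IsOmegaNESurj f} → Fin k := fun g => e (dbrColor g.1) with hχ
  refine ⟨k, hk1, χ, ?_, ?_⟩
  · -- measurability
    intro i
    have himg : Subtype.val '' (χ ⁻¹' {i})
        = {f : ℕ → M | IsOmegaNESurj f ∧ dbrColor f = e.symm i} := by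
      ext f
      constructor
      · rintro ⟨g, hg, rfl⟩
        refine ⟨g.2, ?_⟩
        have : e (dbrColor g.1) = i := hg
        exact (Equiv.symm_apply_eq e).2 this.symm |>.symm
      · rintro ⟨h1, h2⟩
        refine ⟨⟨f, h1⟩, ?_, rfl⟩
        show e (dbrColor f) = i
        rw [h2, Equiv.apply_symm_apply]
    rw [himg]
    exact dbrMeas (e.symm i)
  · -- the counting part
    intro w hw
    have hn0 : 0 < n := hn ▸ Fintype.card_pos
    haveI : NeZero n := ⟨hn0.ne'⟩
    -- a bound on the diameter of M
    obtain ⟨D, hD⟩ : ∃ D : ℕ, ∀ a b : M, dist a b ≤ (D : ℝ) := by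
      obtain ⟨a0⟩ := (inferInstance : Nonempty M)
      set s : Finset ℝ := (Finset.univ : Finset (M × M)).image fun p => dist p.1 p.2 with hs
      have hsne : s.Nonempty :=
        ⟨dist a0 a0, Finset.mem_image.2 ⟨(a0, a0), Finset.mem_univ _, rfl⟩⟩
      refine ⟨⌈s.max' hsne⌉₊, fun a b => ?_⟩
      have h1 : dist a b ≤ s.max' hsne :=
        Finset.le_max' s _ (Finset.mem_image.2 ⟨(a, b), Finset.mem_univ _, rfl⟩)
      exact h1.trans (Nat.le_ceil _)
    -- first occurrence function for `w`
    set τ : ℕ → ℕ := fun v => Nat.find (hw.1 v) with hτdef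
    have hτ : ∀ v, w (τ v) = v := fun v => Nat.find_spec (hw.1 v)
    have hτle : ∀ x, τ (w x) ≤ x := fun x => Nat.find_le rfl
    have τinj : Function.Injective τ := fun a b h => by rw [← hτ a, ← hτ b, h]
    have next : ∀ B t : ℕ, ∃ v, B ≤ v ∧ t < τ v := by
      intro B t
      have hfin : (τ ⁻¹' Set.Iic t).Finite :=
        Set.Finite.preimage τinj.injOn (Set.finite_Iic t)
      obtain ⟨v, hv1, hv2⟩ := ((Set.Ici_infinite B).diff hfin).nonempty
      refine ⟨v, hv1, ?_⟩
      simpa using hv2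
    set U : ℕ → ℕ := dbrU D τ next (w 0) with hUdef
    have hU0 : U 0 = w 0 := rfl
    have hUspec := dbrU_succ D τ next (w 0)
    rw [← hUdef] at hUspec
    have hUmono : StrictMono U := by
      apply strictMono_nat_of_lt_succ
      intro i
      have h2 : U i + 1 ≤ U (i + 1) := le_trans (le_max_right _ _) (hUspec i).1
      omega
    have hUD : ∀ i, D ≤ U (i + 1) := fun i => le_trans (le_max_left _ _) (hUspec i).1
    have hτU : StrictMono fun i => τ (U i) :=
      strictMono_nat_of_lt_succ fun i => (hUspec i).2
    have hτU0 : τ (U 0) = 0 := Nat.le_zero.1 (hU0 ▸ hτle 0)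
    -- for each enumeration σ of M, a witness with prescribed color
    have key : ∀ σ : Fin n ≃ M, ∃ g : {f : ℕ → M // IsOmegaNESurj f},
        (∃ f : ℕ → M, IsOmegaNESurj f ∧ g.1 = f ∘ w) ∧
        (∀ i j : Fin n, dbrColor g.1 (σ i) (σ j) = decide (i ≤ j)) := by
      intro σ
      set F : ℕ → M := fun x =>
        σ (if h : ∃ i : Fin n, 0 < (i : ℕ) ∧ U (i : ℕ) = x then h.choose else 0) with hF
      have hidx : ∀ i : Fin n, F (U (i : ℕ)) = σ i := by
        intro i
        by_cases hi : 0 < (i : ℕ)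
        · have h : ∃ j : Fin n, 0 < (j : ℕ) ∧ U (j : ℕ) = U (i : ℕ) := ⟨i, hi, rfl⟩
          have hch := h.choose_spec
          have hji : h.choose = i := Fin.ext (hUmono.injective hch.2)
          rw [hF]
          simp only [dif_pos h, hji]
        · have hiv : (i : ℕ) = 0 := by omega
          have hi0 : i = 0 := Fin.ext (by rw [hiv, Fin.val_zero])
          have hne : ¬ ∃ j : Fin n, 0 < (j : ℕ) ∧ U (j : ℕ) = U (i : ℕ) := by
            rintro ⟨j, hj, hje⟩
            have := hUmono.injective hje
            omega
          rw [hi0] at hne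
          rw [hF, hi0]
          simp only [dif_neg hne]
      have hinv : ∀ (x : ℕ) (i : Fin n), F x = σ i → 0 < (i : ℕ) → U (i : ℕ) = x := by
        intro x i hFx hi
        rw [hF] at hFx
        have hd := σ.injective hFx
        by_cases h : ∃ j : Fin n, 0 < (j : ℕ) ∧ U (j : ℕ) = x
        · have hch := h.choose_spec
          rw [dif_pos h] at hd
          rw [← hd]
          exact hch.2
        · rw [dif_neg h] at hd
          rw [← hd] at hi
          simp at hi
      have hFsurj : Function.Surjective F := by
        intro m
        refine ⟨U ((σ.symm m : Fin n) : ℕ), ?_⟩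
        rw [hidx, Equiv.apply_symm_apply]
      have hFne : ∀ x y : ℕ, x ≠ y → dist (F x) (F y) ≤ ((max x y : ℕ) : ℝ) := by
        intro x y hxy
        by_cases hfe : F x = F y
        · rw [hfe, dist_self]
          positivity
        · have hDmax : D ≤ max x y := by
            have hone : (∃ i : Fin n, 0 < (i : ℕ) ∧ U (i : ℕ) = x) ∨
                (∃ i : Fin n, 0 < (i : ℕ) ∧ U (i : ℕ) = y) := by
              by_contra hcon
              rw [not_or] at hcon
              apply hfe
              rw [hF]
              simp only [dif_neg hcon.1, dif_neg hcon.2]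
            rcases hone with ⟨i, hi, hix⟩ | ⟨i, hi, hiy⟩
            · obtain ⟨j, hj⟩ : ∃ j, (i : ℕ) = j + 1 := ⟨(i : ℕ) - 1, by omega⟩
              have := hUD j
              rw [← hj, hix] at this
              exact le_trans this (le_max_left _ _)
            · obtain ⟨j, hj⟩ : ∃ j, (i : ℕ) = j + 1 := ⟨(i : ℕ) - 1, by omega⟩
              have := hUD j
              rw [← hj, hiy] at this
              exact le_trans this (le_max_right _ _)
          calc dist (F x) (F y) ≤ (D : ℝ) := hD _ _
            _ ≤ ((max x y : ℕ) : ℝ) := by exact_mod_cast hDmax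
      have hFns : IsOmegaNESurj F := ⟨hFsurj, hFne⟩
      have hGns : IsOmegaNESurj (F ∘ w) := by
        constructor
        · exact hFsurj.comp hw.1
        · intro x y hxy
          by_cases hww : w x = w y
          · show dist (F (w x)) (F (w y)) ≤ _
            rw [hww, dist_self]
            positivity
          · have h1 := hFne (w x) (w y) hww
            have h2 : ((max (w x) (w y) : ℕ) : ℝ) ≤ ((max x y : ℕ) : ℝ) := by
              exact_mod_cast hw.2 x y hww
            exact le_trans h1 h2
      have hocc : ∀ i : Fin n, sInf {x | (F ∘ w) x = σ i} = τ (U (i : ℕ)) := by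
        intro i
        have hwit : (F ∘ w) (τ (U (i : ℕ))) = σ i := by
          show F (w (τ (U (i : ℕ)))) = σ i
          rw [hτ, hidx]
        have hlow : ∀ x, (F ∘ w) x = σ i → τ (U (i : ℕ)) ≤ x := by
          intro x hx
          by_cases hi : 0 < (i : ℕ)
          · have h3 := hinv (w x) i hx hi
            rw [h3]
            exact hτle x
          · have : (i : ℕ) = 0 := by omega
            rw [this, hτU0]
            exact Nat.zero_le x
        have hmem := Nat.sInf_mem (⟨τ (U (i : ℕ)), hwit⟩ :
          Set.Nonempty {x | (F ∘ w) x = σ i})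
        exact le_antisymm (Nat.sInf_le hwit) (hlow _ hmem)
      refine ⟨⟨F ∘ w, hGns⟩, ⟨F, hFns, rfl⟩, ?_⟩
      intro i j
      show dbrColor (F ∘ w) (σ i) (σ j) = decide (i ≤ j)
      rw [dbrColor]
      rw [decide_eq_decide]
      rw [hocc i, hocc j]
      rw [hτU.le_iff_le]
      exact Fin.le_def.symm
    -- assemble the injection
    set S : Set (Fin k) := {c : Fin k | ∃ g : {f : ℕ → M // IsOmegaNESurj f},
        (∃ f : ℕ → M, IsOmegaNESurj f ∧ g.1 = f ∘ w) ∧ χ g = c} with hS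
    set Φ : (Fin n ≃ M) → Fin k := fun σ => χ (key σ).choose with hΦ
    have hΦmem : ∀ σ, Φ σ ∈ S := by
      intro σ
      exact ⟨(key σ).choose, (key σ).choose_spec.1, rfl⟩
    have hΦinj : Function.Injective Φ := by
      intro σ σ' hσσ
      have hcol : dbrColor (key σ).choose.1 = dbrColor (key σ').choose.1 :=
        e.injective hσσ
      have hiff : ∀ i j : Fin n,
          (i ≤ j) ↔ (σ'.symm (σ i) ≤ σ'.symm (σ j)) := by
        intro i j
        have h1 := (key σ).choose_spec.2 i j
        have h2 := (key σ').choose_spec.2 (σ'.symm (σ i)) (σ'.symm (σ j))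
        rw [Equiv.apply_symm_apply, Equiv.apply_symm_apply] at h2
        rw [hcol] at h1
        rw [h1] at h2
        exact decide_eq_decide.1 h2
      set θ : Fin n → Fin n := fun i => σ'.symm (σ i) with hθ
      have hθsm : StrictMono θ := by
        intro i j hij
        have h1 : θ i ≤ θ j := (hiff i j).1 hij.le
        have h2 : θ i ≠ θ j := by
          intro hc
          exact hij.ne (σ.injective (σ'.symm.injective hc))
        exact lt_of_le_of_ne h1 h2
      have hθr : Set.range θ = Set.range (id : Fin n → Fin n) := by
        rw [Set.range_id]
        exact (σ.trans σ'.symm).surjective.range_eq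
      haveI inst : WellFoundedLT (Fin n) := inferInstance
      have hθid : θ = id :=
        (@StrictMono.range_inj (Fin n) (Fin n) _ _ inst θ id hθsm strictMono_id).1 hθr
      apply Equiv.ext
      intro i
      have : σ'.symm (σ i) = i := congrFun hθid i
      calc σ i = σ' (σ'.symm (σ i)) := (σ'.apply_symm_apply _).symm
        _ = σ' i := by rw [this]
    have hsub : Set.range Φ ⊆ S := by
      rintro c ⟨σ, rfl⟩
      exact hΦmem σ
    have hcard : Nat.factorial n = (Set.range Φ).ncard := by
      have h1 : Fintype.card (Fin n ≃ M) = Nat.factorial n := by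
        rw [Fintype.card_equiv (Fintype.equivFinOfCardEq hn).symm]
        simp
      calc Nat.factorial n = Fintype.card (Fin n ≃ M) := h1.symm
        _ = Nat.card (Fin n ≃ M) := (Nat.card_eq_fintype_card).symm
        _ = Nat.card (Set.range Φ) := (Nat.card_range_of_injective hΦinj).symm
        _ = (Set.range Φ).ncard := Nat.card_coe_set_eq _
    rw [hcard]
    exact Set.ncard_le_ncard hsub (Set.toFinite S)
end

section
/- Let U be a countable reflexive digraph such that for every n ≥ 1 there exists a quotient map from U onto n·A₂. Then there exists a quotient map from U onto ω·A₂. (Consequently a countable reflexive digraph is projectively universal for a class of finite reflexive digraphs containing all n·A₂ if and only if it is bi-projectible with ω·A₂.) -/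
/-- A quotient map between relational structures: a surjective map which preserves
and reflects the relation. -/
def IsQuot {V W : Type*} (ρ : V → V → Prop) (σ : W → W → Prop) (f : V → W) : Prop :=
  Function.Surjective f ∧ (∀ x y, ρ x y → σ (f x) (f y)) ∧
    ∀ u v, σ u v → ∃ x y, ρ x y ∧ f x = u ∧ f y = v

/-- The reflexive digraph `ω·A₂`: vertex set `ℕ × Bool`, with all loops together
with the edges `((n, false), (n, true))` for every `n`. -/
def omegaA2 : ℕ × Bool → ℕ × Bool → Prop :=
  fun x y => x = y ∨ (x.1 = y.1 ∧ x.2 = false ∧ y.2 = true)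

/-- The reflexive digraph `n·A₂` on `Fin n × Bool`. -/
def finA2 (n : ℕ) : Fin n × Bool → Fin n × Bool → Prop :=
  fun x y => x = y ∨ (x.1 = y.1 ∧ x.2 = false ∧ y.2 = true)

open Relation

/-- A connected component is crossable: it carries a monotone 2-coloring with
a crossing edge. -/
def Crossing {U : Type} (ρ : U → U → Prop) (x : U) : Prop :=
  ∃ b : U → Bool,
    (∀ u v, EqvGen ρ u x → EqvGen ρ v x → ρ u v → (b u = true → b v = true)) ∧
    ∃ p q, EqvGen ρ p x ∧ EqvGen ρ q x ∧ ρ p q ∧ b p = false ∧ b q = true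

lemma comp_const {U : Type} {n : ℕ} {ρ : U → U → Prop} {f : U → Fin n × Bool}
    (hf : ∀ x y, ρ x y → finA2 n (f x) (f y)) {u v : U} (huv : EqvGen ρ u v) :
    (f u).1 = (f v).1 := by
  induction huv with
  | rel a c hac =>
      rcases hf a c hac with h | h
      · rw [h]
      · exact h.1
  | refl => rfl
  | symm a c _ ih => exact ih.symm
  | trans a c d _ _ ih1 ih2 => exact ih1.trans ih2

/-- For every `n` there are `n` pairwise non-equivalent crossable points. -/
lemma many_crossing {U : Type} {ρ : U → U → Prop}
    (h : ∀ n : ℕ, 1 ≤ n → ∃ f : U → Fin n × Bool, IsQuot ρ (finA2 n) f) (n : ℕ) :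
    ∃ g : Fin n → U, (∀ i, Crossing ρ (g i)) ∧
      ∀ i j, EqvGen ρ (g i) (g j) → i = j := by
  rcases Nat.eq_zero_or_pos n with rfl | hn
  · exact ⟨Fin.elim0, fun i => i.elim0, fun i => i.elim0⟩
  obtain ⟨f, hsurj, hpres, hrefl⟩ := h n hn
  have hwit : ∀ i : Fin n, ∃ x y : U, ρ x y ∧ f x = (i, false) ∧ f y = (i, true) := by
    intro i
    exact hrefl (i, false) (i, true) (Or.inr ⟨rfl, rfl, rfl⟩)
  choose X Y hXY hfX hfY using hwit
  refine ⟨X, fun i => ?_, fun i j hij => ?_⟩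
  · refine ⟨fun u => (f u).2, fun u v _ _ huv hb => ?_, X i, Y i, EqvGen.refl _,
      EqvGen.symm _ _ (EqvGen.rel _ _ (hXY i)), hXY i, ?_, ?_⟩
    · show (f v).2 = true
      replace hb : (f u).2 = true := hb
      rcases hpres u v huv with heq | ⟨_, h2, h3⟩
      · rw [← heq]; exact hb
      · rw [h2] at hb; exact absurd hb (by simp)
    · show (f (X i)).2 = false
      rw [hfX i]
    · show (f (Y i)).2 = true
      rw [hfY i]
  · have := comp_const hpres hij
    rw [hfX i, hfX j] at this
    exact this

/-- A countable reflexive digraph admitting a quotient map onto `n·A₂` for every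
`n ≥ 1` admits a quotient map onto `ω·A₂`. -/
theorem stmt_12 (U : Type) [Countable U] (ρ : U → U → Prop) (hρ : Reflexive ρ)
    (h : ∀ n : ℕ, 1 ≤ n → ∃ f : U → Fin n × Bool, IsQuot ρ (finA2 n) f) :
    ∃ f : U → ℕ × Bool, IsQuot ρ omegaA2 f := by
  classical
  -- the set of crossable components is infinite
  set s : Setoid U := EqvGen.setoid ρ with hs
  set T : Set (Quotient s) := {q | ∃ x, Quotient.mk s x = q ∧ Crossing ρ x} with hT
  have hTinf : T.Infinite := by
    intro hfin
    have : Fintype T := hfin.fintype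
    obtain ⟨g, hg1, hg2⟩ := many_crossing h (Fintype.card T + 1)
    have hinj : Function.Injective
        (fun i : Fin (Fintype.card T + 1) => (⟨Quotient.mk s (g i), ⟨g i, rfl, hg1 i⟩⟩ : T)) := by
      intro i j hij
      apply hg2
      have : Quotient.mk s (g i) = Quotient.mk s (g j) := congrArg Subtype.val hij
      exact Quotient.exact this
    have := Fintype.card_le_of_injective _ hinj
    simp at this
  let e : ℕ ↪ T := hTinf.natEmbedding
  have hx : ∀ m : ℕ, ∃ x : U, Quotient.mk s x = (e m : Quotient s) ∧ Crossing ρ x :=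
    fun m => (e m).2
  choose x hxe hxc using hx
  choose b hbmono p q hpE hqE hpq hbp hbq using hxc
  have hxinj : ∀ m m' : ℕ, EqvGen ρ (x m) (x m') → m = m' := by
    intro m m' hmm
    have : (e m : Quotient s) = (e m' : Quotient s) := by
      rw [← hxe m, ← hxe m']
      exact Quotient.sound hmm
    exact e.injective (Subtype.ext this)
  -- the quotient map
  set F : U → ℕ × Bool := fun u =>
    if hu : ∃ m, EqvGen ρ u (x m) then (hu.choose, b hu.choose u) else (0, false) with hF
  have hFval : ∀ (u : U) (m : ℕ), EqvGen ρ u (x m) → F u = (m, b m u) := by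
    intro u m hum
    have hu : ∃ m, EqvGen ρ u (x m) := ⟨m, hum⟩
    have hch : EqvGen ρ u (x hu.choose) := hu.choose_spec
    have : hu.choose = m :=
      hxinj _ _ (EqvGen.trans _ _ _ (EqvGen.symm _ _ hch) hum)
    simp only [hF, dif_pos hu, this]
  have hpcls : ∀ m, EqvGen ρ (p m) (x m) := hpE
  refine ⟨F, ?_, ?_, ?_⟩
  · -- surjective
    rintro ⟨m, bb⟩
    cases bb
    · exact ⟨p m, by rw [hFval (p m) m (hpE m), hbp m]⟩
    · exact ⟨q m, by rw [hFval (q m) m (hqE m), hbq m]⟩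
  · -- preserves
    intro u v huv
    have hE : EqvGen ρ u v := EqvGen.rel _ _ huv
    by_cases hu : ∃ m, EqvGen ρ u (x m)
    · obtain ⟨m, hum⟩ := hu
      have hvm : EqvGen ρ v (x m) := EqvGen.trans _ _ _ (EqvGen.symm _ _ hE) hum
      rw [hFval u m hum, hFval v m hvm]
      have hmono := hbmono m u v hum hvm huv
      cases hbu : b m u
      · cases hbv : b m v
        · exact Or.inl rfl
        · exact Or.inr ⟨rfl, rfl, rfl⟩
      · rw [hmono hbu]
        exact Or.inl rfl
    · have hv : ¬ ∃ m, EqvGen ρ v (x m) := by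
        rintro ⟨m, hvm⟩
        exact hu ⟨m, EqvGen.trans _ _ _ hE hvm⟩
      simp only [hF, dif_neg hu, dif_neg hv]
      exact Or.inl rfl
  · -- reflects
    rintro u v (rfl | ⟨h1, h2, h3⟩)
    · have : ∃ w, F w = u := by
        rcases u with ⟨m, bb⟩
        cases bb
        · exact ⟨p m, by rw [hFval (p m) m (hpE m), hbp m]⟩
        · exact ⟨q m, by rw [hFval (q m) m (hqE m), hbq m]⟩
      obtain ⟨w, hw⟩ := this
      exact ⟨w, w, hρ w, hw, hw⟩
    · refine ⟨p u.1, q u.1, hpq u.1, ?_, ?_⟩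
      · rw [hFval (p u.1) u.1 (hpE u.1), hbp u.1]
        exact Prod.ext_iff.mpr ⟨rfl, h2.symm⟩
      · rw [hFval (q u.1) u.1 (hqE u.1), hbq u.1]
        exact Prod.ext_iff.mpr ⟨h1, h3.symm⟩
end

section
/- For every nonempty countable (finite or countably infinite) reflexive digraph U there exists a quotient map from ω·A₂ onto U. (That is, ω·A₂ is projectively universal for all countable reflexive digraphs with respect to quotient maps.) -/
/-- `ω·A₂` is projectively universal for all countable reflexive digraphs: every
nonempty countable reflexive digraph is a quotient of `ω·A₂`. -/
theorem stmt_13 (U : Type) [Countable U] [Nonempty U]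
    (ρ : U → U → Prop) (hρ : Reflexive ρ) :
    ∃ f : ℕ × Bool → U, IsQuot omegaA2 ρ f := by
  classical
  obtain ⟨h, hh⟩ := exists_surjective_nat (U × U)
  refine ⟨fun p => if p.2 = true then (if ρ (h p.1).1 (h p.1).2 then (h p.1).2 else (h p.1).1)
    else (h p.1).1, ?_, ?_, ?_⟩
  · intro u
    obtain ⟨n, hn⟩ := hh (u, u)
    exact ⟨(n, false), by simp [hn]⟩
  · rintro x y (rfl | ⟨h1, h2, h3⟩)
    · exact hρ _
    · obtain ⟨n, b⟩ := x
      obtain ⟨m, c⟩ := y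
      simp only at h1 h2 h3
      subst h1 h2 h3
      by_cases hr : ρ (h n).1 (h n).2 <;> simp [hr, hρ _]
  · intro u v huv
    obtain ⟨n, hn⟩ := hh (u, v)
    exact ⟨(n, false), (n, true), Or.inr ⟨rfl, rfl, rfl⟩, by simp [hn], by simp [hn, huv]⟩
end

section
/- For odd n ≥ 3 let T_n denote the reflexive tournament on ZMod n in which i → j if and only if j = i or j − i (computed in ZMod n, represented in {0, 1, …, n−1}) lies in {1, …, (n−1)/2}. Then for all distinct odd m, n ≥ 3 the tournaments T_m and T_n are not siblings: there is no finite reflexive tournament T admitting surjective homomorphisms onto both T_m and T_n. (Hence there is a countable family of finite reflexive tournaments no two of which are siblings.) -/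
/-- A reflexive tournament: a reflexive relation such that for `x ≠ y` exactly one
of `x → y`, `y → x` holds. -/
def IsTournament {T : Type*} (ρ : T → T → Prop) : Prop :=
  Reflexive ρ ∧ ∀ x y : T, x ≠ y → (ρ x y ↔ ¬ρ y x)

/-- The rotational tournament `T_n` on `ZMod n` (for odd `n`): `i → j` iff `j = i`
or `j - i`, represented in `{0, 1, …, n-1}`, lies in `{1, …, (n-1)/2}`. -/
def Trel (n : ℕ) (i j : ZMod n) : Prop :=
  j = i ∨ (j - i).val ∈ Finset.Icc 1 ((n - 1) / 2)

/-! ### Auxiliary lemmas -/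

lemma aux_cast_ne_zero {n c : ℕ} (hc1 : 1 ≤ c) (hc2 : c < n) : (c : ZMod n) ≠ 0 := by
  haveI : NeZero n := ⟨by omega⟩
  intro h
  have h2 := ZMod.val_cast_of_lt hc2
  rw [h, ZMod.val_zero] at h2
  omega

lemma aux_shift_val {n : ℕ} {c : ℕ} (hc1 : 1 ≤ c) (hc2 : c < n) (b : ZMod n) :
    (b - (b + (c : ZMod n))).val = n - c ∧ b + (c : ZMod n) ≠ b := by
  haveI : NeZero n := ⟨by omega⟩
  have hcz : (c : ZMod n) ≠ 0 := aux_cast_ne_zero hc1 hc2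
  have h1 : b - (b + (c : ZMod n)) = -(c : ZMod n) := by ring
  refine ⟨?_, ?_⟩
  · rw [h1, ZMod.neg_val, if_neg hcz, ZMod.val_cast_of_lt hc2]
  · intro h
    apply hcz
    have : (c : ZMod n) = (b + (c : ZMod n)) - b := by ring
    rw [this, h, sub_self]

lemma trel_asymm {n : ℕ} (hn : Odd n) (hn3 : 3 ≤ n) {i j : ZMod n} (hij : i ≠ j) :
    Trel n i j ↔ ¬ Trel n j i := by
  haveI : NeZero n := ⟨by omega⟩
  have hu : j - i ≠ 0 := sub_ne_zero.mpr hij.symm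
  have hv0 : (j - i).val ≠ 0 := fun h => hu ((ZMod.val_eq_zero _).mp h)
  have hvlt : (j - i).val < n := ZMod.val_lt _
  have hval : (i - j).val = n - (j - i).val := by
    have h2 : i - j = -(j - i) := by ring
    rw [h2, ZMod.neg_val, if_neg hu]
  have hmod : n % 2 = 1 := Nat.odd_iff.mp hn
  simp only [Trel, Finset.mem_Icc, hval]
  constructor
  · rintro (h | h)
    · exact absurd h hij.symm
    · rintro (h' | h')
      · exact hij h'
      · omega
  · intro hcon
    refine Or.inr ?_
    by_contra hne
    exact hcon (Or.inr (by omega))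

lemma arc_det {n : ℕ} (hn : Odd n) (hn3 : 3 ≤ n) {T : Type} {ρ : T → T → Prop}
    (ht : IsTournament ρ) {f : T → ZMod n} (hf : ∀ x y, ρ x y → Trel n (f x) (f y))
    {x y : T} (hxy : f x ≠ f y) : ρ x y ↔ Trel n (f x) (f y) := by
  constructor
  · exact hf x y
  · intro h
    by_contra hr
    have hxyne : x ≠ y := fun e => hxy (by rw [e])
    have hyx : ρ y x := by
      by_contra h2
      exact hr ((ht.2 x y hxyne).mpr h2)
    exact ((trel_asymm hn hn3 hxy).mp h) (hf y x hyx)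

/-- module predicate on `ZMod n` w.r.t. `Trel n` -/
def IsMod (n : ℕ) (M : Set (ZMod n)) : Prop :=
  ∀ l, l ∉ M → ∀ p ∈ M, ∀ q ∈ M, (Trel n l p ↔ Trel n l q)

lemma mod_step {n : ℕ} (hn : Odd n) (hn3 : 3 ≤ n) {M : Set (ZMod n)} (hM : IsMod n M)
    {a : ZMod n} (ha : a ∈ M) {d t : ℕ} (hd : a + (d : ZMod n) ∈ M)
    (ht1 : 1 ≤ t) (htd : t ≤ d) (hdh : d ≤ (n - 1) / 2) :
    a + (((n - 1) / 2 + t : ℕ) : ZMod n) ∈ M := by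
  have hmod : n % 2 = 1 := Nat.odd_iff.mp hn
  set h := (n - 1) / 2 with hh
  set c := h + t with hc
  by_contra hl
  have hc1 : 1 ≤ c := by omega
  have hc2 : c < n := by omega
  have key := hM (a + (c : ZMod n)) hl a ha (a + (d : ZMod n)) hd
  obtain ⟨hval1, hne1⟩ := aux_shift_val hc1 hc2 a
  -- second: a + c = (a + d) + (c - d)
  have hcd1 : 1 ≤ c - d := by omega
  have hcd2 : c - d < n := by omega
  obtain ⟨hval2, hne2⟩ := aux_shift_val hcd1 hcd2 (a + (d : ZMod n))
  have hsplit : a + (c : ZMod n) = (a + (d : ZMod n)) + ((c - d : ℕ) : ZMod n) := by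
    rw [add_assoc, ← Nat.cast_add]
    congr 1
    congr 1
    omega
  have hT1 : Trel n (a + (c : ZMod n)) a := by
    refine Or.inr ?_
    rw [hval1]
    simp only [Finset.mem_Icc]
    omega
  have hT2 : ¬ Trel n (a + (c : ZMod n)) (a + (d : ZMod n)) := by
    rintro (he | hr)
    · rw [hsplit] at he
      exact hne2 he.symm
    · rw [hsplit] at hr
      rw [hval2] at hr
      simp only [Finset.mem_Icc] at hr
      omega
  exact hT2 (key.mp hT1)

lemma natCast_val_self {n : ℕ} [NeZero n] (a : ZMod n) : ((a.val : ℕ) : ZMod n) = a := by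
  rw [ZMod.natCast_val, ZMod.cast_id]

lemma mod_univ {n : ℕ} (hn : Odd n) (hn3 : 3 ≤ n) {M : Set (ZMod n)} (hM : IsMod n M)
    {i j : ZMod n} (hi : i ∈ M) (hj : j ∈ M) (hij : i ≠ j) : ∀ l, l ∈ M := by
  haveI : NeZero n := ⟨by omega⟩
  have hmod : n % 2 = 1 := Nat.odd_iff.mp hn
  set h := (n - 1) / 2 with hh
  -- produce a base pair (a, a + d) with 1 ≤ d ≤ h
  obtain ⟨a, d, ha, had, hd1, hdh⟩ :
      ∃ (a : ZMod n) (d : ℕ), a ∈ M ∧ a + (d : ZMod n) ∈ M ∧ 1 ≤ d ∧ d ≤ h := by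
    have hu : j - i ≠ 0 := sub_ne_zero.mpr hij.symm
    have hv0 : (j - i).val ≠ 0 := fun hz => hu ((ZMod.val_eq_zero _).mp hz)
    have hvlt : (j - i).val < n := ZMod.val_lt _
    by_cases hcase : (j - i).val ≤ h
    · refine ⟨i, (j - i).val, hi, ?_, by omega, hcase⟩
      rw [natCast_val_self]
      simp [hj]
    · refine ⟨j, n - (j - i).val, hj, ?_, by omega, by omega⟩
      have : ((n - (j - i).val : ℕ) : ZMod n) = i - j := by
        have h1 : ((n - (j - i).val : ℕ) : ZMod n) = (n : ZMod n) - ((j - i).val : ZMod n) := by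
          rw [← Nat.cast_sub (le_of_lt hvlt)]
        rw [h1, ZMod.natCast_self, natCast_val_self]
        ring
      rw [this]
      simp [hi]
  -- step 1 : a + (h+1) ∈ M
  have step1 : a + ((h + 1 : ℕ) : ZMod n) ∈ M := by
    exact mod_step hn hn3 hM ha had le_rfl hd1 hdh
  -- step 2 : ∀ t ∈ [1,h], a + t ∈ M
  have hcastn : ((n : ℕ) : ZMod n) = 0 := ZMod.natCast_self n
  have step2 : ∀ t : ℕ, 1 ≤ t → t ≤ h → a + (t : ZMod n) ∈ M := by
    intro t ht1 hth
    have hpair : (a + ((h + 1 : ℕ) : ZMod n)) + ((h : ℕ) : ZMod n) ∈ M := by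
      have : (a + ((h + 1 : ℕ) : ZMod n)) + ((h : ℕ) : ZMod n) = a := by
        rw [add_assoc, ← Nat.cast_add]
        have h2 : h + 1 + h = n := by omega
        rw [h2, hcastn, add_zero]
      rwa [this]
    have := mod_step hn hn3 hM step1 hpair ht1 hth le_rfl
    have heq : (a + ((h + 1 : ℕ) : ZMod n)) + ((h + t : ℕ) : ZMod n) = a + (t : ZMod n) := by
      rw [add_assoc, ← Nat.cast_add]
      have h2 : h + 1 + (h + t) = n + t := by omega
      rw [h2, Nat.cast_add, hcastn, zero_add]
    rwa [heq] at this
  -- step 3 : ∀ t ∈ [1,h], a + (h + t) ∈ M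
  have step3 : ∀ t : ℕ, 1 ≤ t → t ≤ h → a + ((h + t : ℕ) : ZMod n) ∈ M := by
    intro t ht1 hth
    have hah : a + ((h : ℕ) : ZMod n) ∈ M := step2 h (by omega) le_rfl
    exact mod_step hn hn3 hM ha hah ht1 hth le_rfl
  -- finish
  intro l
  have hw : l = a + (((l - a).val : ℕ) : ZMod n) := by
    rw [natCast_val_self]
    ring
  set w := (l - a).val with hwdef
  have hwlt : w < n := ZMod.val_lt _
  rcases Nat.eq_zero_or_pos w with h0 | hpos
  · have : l = a := by rw [hw, h0]; simp
    rwa [this]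
  · by_cases hwh : w ≤ h
    · rw [hw]; exact step2 w hpos hwh
    · rw [hw]
      have : w = h + (w - h) := by omega
      rw [this]
      exact step3 (w - h) (by omega) (by omega)

lemma fiber_image_univ
    {a b : ℕ} (ha : Odd a) (ha3 : 3 ≤ a) (hb : Odd b) (hb3 : 3 ≤ b)
    {T : Type} {ρ : T → T → Prop} (ht : IsTournament ρ)
    {f : T → ZMod a} (hfs : Function.Surjective f)
    (hf : ∀ x y, ρ x y → Trel a (f x) (f y))
    {g : T → ZMod b} (hg : ∀ x y, ρ x y → Trel b (g x) (g y))
    {x0 y0 : T} (hg0 : g x0 = g y0) (hf0 : f x0 ≠ f y0) :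
    ∀ i : ZMod a, ∃ z, g z = g x0 ∧ f z = i := by
  set M : Set (ZMod a) := {i | ∃ z, g z = g x0 ∧ f z = i} with hMdef
  have hmod : IsMod a M := by
    rintro l hl p ⟨x, hgx, rfl⟩ q ⟨y, hgy, rfl⟩
    obtain ⟨z, hz⟩ := hfs l
    have hgz : g z ≠ g x0 := fun hc => hl ⟨z, hc, hz⟩
    have hlp : f z ≠ f x := by rw [hz]; exact fun hc => hl ⟨x, hgx, hc.symm⟩
    have hlq : f z ≠ f y := by rw [hz]; exact fun hc => hl ⟨y, hgy, hc.symm⟩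
    have e1 : ρ z x ↔ Trel a (f z) (f x) := arc_det ha ha3 ht hf hlp
    have e2 : ρ z x ↔ Trel b (g z) (g x) := arc_det hb hb3 ht hg (by rw [hgx]; exact hgz)
    have e3 : ρ z y ↔ Trel a (f z) (f y) := arc_det ha ha3 ht hf hlq
    have e4 : ρ z y ↔ Trel b (g z) (g y) := arc_det hb hb3 ht hg (by rw [hgy]; exact hgz)
    rw [hz] at e1 e3
    rw [hgx] at e2
    rw [hgy] at e4
    rw [← e1, e2, ← e4, e3]
  have h1 : f x0 ∈ M := ⟨x0, rfl, rfl⟩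
  have h2 : f y0 ∈ M := ⟨y0, hg0.symm, rfl⟩
  exact mod_univ ha ha3 hmod h1 h2 hf0

lemma zmod_one_ne_zero {a : ℕ} (ha3 : 3 ≤ a) : (1 : ZMod a) ≠ 0 := by
  have h := aux_cast_ne_zero (n := a) (c := 1) le_rfl (by omega)
  simpa using h

lemma factor_lemma {a b : ℕ} (ha : Odd a) (ha3 : 3 ≤ a) (hb : Odd b) (hb3 : 3 ≤ b)
    (hab : a ≠ b)
    {T : Type} {ρ : T → T → Prop} (ht : IsTournament ρ)
    {f : T → ZMod a} (hfs : Function.Surjective f)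
    (hf : ∀ x y, ρ x y → Trel a (f x) (f y))
    {g : T → ZMod b} (hgs : Function.Surjective g)
    (hg : ∀ x y, ρ x y → Trel b (g x) (g y))
    (hfac : ∀ x y, g x = g y → f x = f y) : False := by
  haveI : NeZero a := ⟨by omega⟩
  haveI : NeZero b := ⟨by omega⟩
  set hh : ZMod b → ZMod a := fun k => f (Function.surjInv hgs k) with hhdef
  have hcomp : ∀ x, hh (g x) = f x := fun x =>
    hfac _ _ (Function.surjInv_eq hgs (g x))
  have hhs : Function.Surjective hh := by
    intro i
    obtain ⟨x, rfl⟩ := hfs i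
    exact ⟨g x, hcomp x⟩
  have harc : ∀ k k' : ZMod b, hh k ≠ hh k' → (Trel b k k' ↔ Trel a (hh k) (hh k')) := by
    intro k k' hne
    have hkk' : k ≠ k' := fun e => hne (by rw [e])
    have hx : g (Function.surjInv hgs k) = k := Function.surjInv_eq hgs k
    have hy : g (Function.surjInv hgs k') = k' := Function.surjInv_eq hgs k'
    have e1 : ρ (Function.surjInv hgs k) (Function.surjInv hgs k') ↔
        Trel b (g (Function.surjInv hgs k)) (g (Function.surjInv hgs k')) :=
      arc_det hb hb3 ht hg (by rw [hx, hy]; exact hkk')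
    have e2 : ρ (Function.surjInv hgs k) (Function.surjInv hgs k') ↔
        Trel a (f (Function.surjInv hgs k)) (f (Function.surjInv hgs k')) :=
      arc_det ha ha3 ht hf hne
    rw [hx, hy] at e1
    rw [← e1, e2]
  -- hh is injective
  have hinj : Function.Injective hh := by
    intro k k' hkk'
    by_contra hne
    set M : Set (ZMod b) := {l | hh l = hh k} with hMdef
    have hmod : IsMod b M := by
      intro l hl p hp q hq
      have hlp : hh l ≠ hh p := by rw [hp]; exact hl
      have hlq : hh l ≠ hh q := by rw [hq]; exact hl
      rw [harc l p hlp, harc l q hlq, hp, hq]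
    have huniv := mod_univ hb hb3 hmod (show k ∈ M from rfl)
      (show k' ∈ M from hkk'.symm) hne
    obtain ⟨k1, hk1⟩ := hhs 0
    obtain ⟨k2, hk2⟩ := hhs 1
    have e1 : hh k1 = hh k := huniv k1
    have e2 : hh k2 = hh k := huniv k2
    rw [hk1] at e1
    rw [hk2] at e2
    exact zmod_one_ne_zero ha3 (e2.trans e1.symm)
  have hbij : Function.Bijective hh := ⟨hinj, hhs⟩
  have hcard : b = a := by
    have := Fintype.card_of_bijective hbij
    rwa [ZMod.card, ZMod.card] at this
  exact hab hcard.symm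

lemma trel_succ {b : ℕ} (hb3 : 3 ≤ b) (k : ZMod b) : Trel b k (k + 1) := by
  haveI : NeZero b := ⟨by omega⟩
  refine Or.inr ?_
  have h1 : k + 1 - k = ((1 : ℕ) : ZMod b) := by push_cast; ring
  rw [h1, ZMod.val_cast_of_lt (by omega)]
  simp only [Finset.mem_Icc]
  omega

lemma trel_pred {b : ℕ} (hb3 : 3 ≤ b) (k : ZMod b) : ¬ Trel b k (k - 1) := by
  haveI : NeZero b := ⟨by omega⟩
  have hone : ((1 : ℕ) : ZMod b) ≠ 0 := aux_cast_ne_zero le_rfl (by omega)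
  rintro (h | h)
  · apply hone
    have : ((1 : ℕ) : ZMod b) = k - (k - 1) := by push_cast; ring
    rw [this, h, sub_self]
  · have h1 : k - 1 - k = -((1 : ℕ) : ZMod b) := by push_cast; ring
    rw [h1, ZMod.neg_val, if_neg hone, ZMod.val_cast_of_lt (show 1 < b by omega)] at h
    simp only [Finset.mem_Icc] at h
    omega

lemma add_one_ne {b : ℕ} (hb3 : 3 ≤ b) (k : ZMod b) : k + 1 ≠ k := by
  haveI : NeZero b := ⟨by omega⟩
  have hone : ((1 : ℕ) : ZMod b) ≠ 0 := aux_cast_ne_zero le_rfl (by omega)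
  intro h
  apply hone
  have : ((1 : ℕ) : ZMod b) = (k + 1) - k := by push_cast; ring
  rw [this, h, sub_self]

lemma sub_one_ne {b : ℕ} (hb3 : 3 ≤ b) (k : ZMod b) : k - 1 ≠ k := by
  haveI : NeZero b := ⟨by omega⟩
  have hone : ((1 : ℕ) : ZMod b) ≠ 0 := aux_cast_ne_zero le_rfl (by omega)
  intro h
  apply hone
  have : ((1 : ℕ) : ZMod b) = k - (k - 1) := by push_cast; ring
  rw [this, h, sub_self]

/-- For distinct odd `m, n ≥ 3`, the tournaments `T_m` and `T_n` are not siblings: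
no finite reflexive tournament admits surjective homomorphisms onto both. -/
theorem stmt_17 (m n : ℕ) (hm : Odd m) (hn : Odd n) (hm3 : 3 ≤ m) (hn3 : 3 ≤ n)
    (hmn : m ≠ n) :
    ¬∃ (T : Type) (_ : Fintype T) (ρ : T → T → Prop),
      IsTournament ρ ∧
      (∃ f : T → ZMod m, Function.Surjective f ∧
        ∀ x y : T, ρ x y → Trel m (f x) (f y)) ∧
      (∃ g : T → ZMod n, Function.Surjective g ∧
        ∀ x y : T, ρ x y → Trel n (g x) (g y)) := by
  rintro ⟨T, _, ρ, htourn, ⟨f, hfs, hf⟩, ⟨g, hgs, hg⟩⟩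
  by_cases hP : ∀ x y, g x = g y → f x = f y
  · exact factor_lemma hm hm3 hn hn3 hmn htourn hfs hf hgs hg hP
  by_cases hQ : ∀ x y, f x = f y → g x = g y
  · exact factor_lemma hn hn3 hm hm3 (Ne.symm hmn) htourn hgs hg hfs hf hQ
  push_neg at hP hQ
  obtain ⟨x1, y1, hg1, hf1⟩ := hP
  obtain ⟨x2, y2, hf2, hg2⟩ := hQ
  have hR : ∀ i : ZMod m, ∃ z, g z = g x1 ∧ f z = i :=
    fiber_image_univ hm hm3 hn hn3 htourn hfs hf hg hg1 hf1
  have hS : ∀ k : ZMod n, ∃ z, f z = f x2 ∧ g z = k :=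
    fiber_image_univ hn hn3 hm hm3 htourn hgs hg hf hf2 hg2
  set i0 := f x2 with hi0
  set k0 := g x1 with hk0
  obtain ⟨y, hyg, hyf⟩ := hR (i0 + 1)
  obtain ⟨z1, hz1f, hz1g⟩ := hS (k0 + 1)
  obtain ⟨z2, hz2f, hz2g⟩ := hS (k0 - 1)
  have e1 : ρ y z1 ↔ Trel m (i0 + 1) i0 := by
    have := arc_det hm hm3 htourn hf (x := y) (y := z1)
      (by rw [hyf, hz1f]; exact add_one_ne hm3 i0)
    rwa [hyf, hz1f] at this
  have e2 : ρ y z1 ↔ Trel n k0 (k0 + 1) := by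
    have := arc_det hn hn3 htourn hg (x := y) (y := z1)
      (by rw [hyg, hz1g]; exact (add_one_ne hn3 k0).symm)
    rwa [hyg, hz1g] at this
  have e3 : ρ y z2 ↔ Trel m (i0 + 1) i0 := by
    have := arc_det hm hm3 htourn hf (x := y) (y := z2)
      (by rw [hyf, hz2f]; exact add_one_ne hm3 i0)
    rwa [hyf, hz2f] at this
  have e4 : ρ y z2 ↔ Trel n k0 (k0 - 1) := by
    have := arc_det hn hn3 htourn hg (x := y) (y := z2)
      (by rw [hyg, hz2g]; exact (sub_one_ne hn3 k0).symm)
    rwa [hyg, hz2g] at this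
  have hTsucc : Trel n k0 (k0 + 1) := trel_succ hn3 k0
  have hTm : Trel m (i0 + 1) i0 := e1.mp (e2.mpr hTsucc)
  exact trel_pred hn3 k0 (e4.mp (e3.mpr hTm))
end

section
/- Let A₃ denote the reflexive acyclic tournament on Fin 3 with i → j iff i ≤ j. For every n ≥ 1 there exists a finite reflexive tournament B such that for every finite reflexive tournament S admitting a surjective homomorphism onto B, there exists a coloring χ : Surj(S, A₃) → Fin n with the property that for every surjective homomorphism w : S → B the set {χ(f ∘ w) : f ∈ Surj(B, A₃)} is all of Fin n. (Consequently the class of finite reflexive tournaments with surjective homomorphisms does not have dual small Ramsey degrees: A₃ has no finite dual small Ramsey degree.) -/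
/-- The reflexive acyclic tournament `A₃` on `Fin 3`: `i → j` iff `i ≤ j`. -/
def A3 : Fin 3 → Fin 3 → Prop := fun i j => i ≤ j

/-- A surjective homomorphism of reflexive tournaments. -/
def SurjHom {S T : Type*} (ρS : S → S → Prop) (ρT : T → T → Prop) (f : S → T) : Prop :=
  Function.Surjective f ∧ ∀ x y : S, ρS x y → ρT (f x) (f y)

namespace Stmt18Aux

/-- cyclic relation on Fin 3 -/
abbrev c3 (u v : Fin 3) : Prop := v = u ∨ v = u + 1

/-- B : ordered sum of n+2 copies of the 3-cycle -/
def rhoB (n : ℕ) : (Fin (n+2) × Fin 3) → (Fin (n+2) × Fin 3) → Prop :=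
  fun b b' => b.1 < b'.1 ∨ (b.1 = b'.1 ∧ c3 b.2 b'.2)

lemma c3_refl (u : Fin 3) : c3 u u := Or.inl rfl
lemma c3_iff : ∀ u v : Fin 3, u ≠ v → (c3 u v ↔ ¬ c3 v u) := by decide
lemma c3_succ_not : ∀ u : Fin 3, ¬ c3 (u+1) u := by decide
lemma c3_ssucc_not : ∀ u : Fin 3, ¬ c3 (u+2) (u+1) := by decide
lemma c3_two_not : ∀ u : Fin 3, ¬ c3 u (u+2) := by decide
lemma fin3_ne_succ : ∀ u : Fin 3, u ≠ u + 1 := by decide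
lemma fin3_ne_two : ∀ u : Fin 3, u ≠ u + 2 := by decide
lemma fin3_succ_ne_two : ∀ u : Fin 3, u + 1 ≠ u + 2 := by decide

lemma rhoB_tournament (n : ℕ) : IsTournament (rhoB n) := by
  constructor
  · intro b; exact Or.inr ⟨rfl, c3_refl _⟩
  · rintro ⟨k, u⟩ ⟨l, v⟩ hne
    constructor
    · rintro (h | ⟨rfl, hc⟩)
      · rintro (h' | ⟨rfl, _⟩)
        · exact absurd h' (lt_asymm h)
        · exact absurd h (lt_irrefl _)
      · rintro (h' | ⟨-, hc'⟩)
        · exact absurd h' (lt_irrefl _)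
        · have huv : u ≠ v := by rintro rfl; exact hne rfl
          exact ((c3_iff u v huv).mp hc) hc'
    · intro hnot
      rcases lt_trichotomy k l with h | h | h
      · exact Or.inl h
      · subst h
        have huv : u ≠ v := by rintro rfl; exact hne rfl
        have hnc : ¬ c3 v u := fun hc => hnot (Or.inr ⟨rfl, hc⟩)
        exact Or.inr ⟨rfl, (c3_iff u v huv).mpr hnc⟩
      · exact absurd (Or.inl h) hnot

/-- The crucial factorization lemma: any surjective homomorphism `h : S → A3`
factors through any surjective homomorphism `w : S → B`. -/
lemma factor (n : ℕ) {S : Type} (ρS : S → S → Prop) (hS : IsTournament ρS)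
    (h : S → Fin 3) (hh : SurjHom ρS A3 h)
    (w : S → Fin (n+2) × Fin 3) (hw : SurjHom ρS (rhoB n) w) :
    ∃ f : (Fin (n+2) × Fin 3) → Fin 3, SurjHom (rhoB n) A3 f ∧ h = f ∘ w := by
  -- key monotonicity lemma
  have key : ∀ x y : S, rhoB n (w x) (w y) → h x ≤ h y := by
    intro x y hxy
    by_cases heq : w x = w y
    · -- same fiber block: chase the 3-cycle
      obtain ⟨z1, hz1⟩ := hw.1 ((w x).1, (w x).2 + 1)
      obtain ⟨z2, hz2⟩ := hw.1 ((w x).1, (w x).2 + 2)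
      -- x → z1
      have hxz1 : ρS x z1 := by
        have hne : x ≠ z1 := by
          intro e
          rw [← e] at hz1
          exact fin3_ne_succ (w x).2 (congrArg Prod.snd hz1)
        refine (hS.2 x z1 hne).mpr ?_
        intro hzx
        have := hw.2 z1 x hzx
        rw [hz1] at this
        rcases this with hlt | ⟨-, hc⟩
        · exact lt_irrefl _ hlt
        · exact c3_succ_not _ hc
      -- z1 → z2
      have hz1z2 : ρS z1 z2 := by
        have hne : z1 ≠ z2 := by
          intro e
          rw [e, hz2] at hz1
          exact fin3_succ_ne_two (w x).2 (congrArg Prod.snd hz1).symm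
        refine (hS.2 z1 z2 hne).mpr ?_
        intro hzz
        have := hw.2 z2 z1 hzz
        rw [hz1, hz2] at this
        rcases this with hlt | ⟨-, hc⟩
        · exact lt_irrefl _ hlt
        · exact c3_ssucc_not _ hc
      -- z2 → y
      have hz2y : ρS z2 y := by
        have hne : z2 ≠ y := by
          intro e
          rw [e, ← heq] at hz2
          exact fin3_ne_two (w x).2 (congrArg Prod.snd hz2)
        refine (hS.2 z2 y hne).mpr ?_
        intro hyz
        have := hw.2 y z2 hyz
        rw [hz2, ← heq] at this
        rcases this with hlt | ⟨-, hc⟩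
        · exact lt_irrefl _ hlt
        · exact c3_two_not _ hc
      have h1 : h x ≤ h z1 := hh.2 x z1 hxz1
      have h2 : h z1 ≤ h z2 := hh.2 z1 z2 hz1z2
      have h3 : h z2 ≤ h y := hh.2 z2 y hz2y
      exact le_trans h1 (le_trans h2 h3)
    · -- different images: the edge x → y is forced
      have hxyne : x ≠ y := fun e => heq (by rw [e])
      by_cases hρ : ρS x y
      · exact hh.2 x y hρ
      · exfalso
        have hyx : ρS y x := (hS.2 y x (Ne.symm hxyne)).mpr hρ
        have h2 := hw.2 y x hyx
        have := ((rhoB_tournament n).2 (w y) (w x) (fun e => heq e.symm)).mp h2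
        exact this hxy
  have const : ∀ x y : S, w x = w y → h x = h y := by
    intro x y e
    have h1 : rhoB n (w x) (w y) := by rw [e]; exact (rhoB_tournament n).1 _
    have h2 : rhoB n (w y) (w x) := by rw [e]; exact (rhoB_tournament n).1 _
    exact le_antisymm (key x y h1) (key y x h2)
  classical
  refine ⟨fun b => h (hw.1 b).choose, ⟨?_, ?_⟩, ?_⟩
  · -- surjectivity
    intro v
    obtain ⟨x, hx⟩ := hh.1 v
    refine ⟨w x, ?_⟩
    show h (hw.1 (w x)).choose = v
    rw [const (hw.1 (w x)).choose x (hw.1 (w x)).choose_spec, hx]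
  · -- homomorphism
    intro b b' hbb'
    have hb : w (hw.1 b).choose = b := (hw.1 b).choose_spec
    have hb' : w (hw.1 b').choose = b' := (hw.1 b').choose_spec
    exact key _ _ (by rw [hb, hb']; exact hbb')
  · funext x
    exact (const (hw.1 (w x)).choose x (hw.1 (w x)).choose_spec).symm

/-- The family of surjective homomorphisms `B → A3` indexed by `Fin n`. -/
def F (n : ℕ) (c : Fin n) : (Fin (n+2) × Fin 3) → Fin 3 :=
  fun b => if (b.1 : ℕ) ≤ (c : ℕ) then 0 else if (b.1 : ℕ) = (c : ℕ) + 1 then 1 else 2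

lemma F_surjhom (n : ℕ) (c : Fin n) : SurjHom (rhoB n) A3 (F n c) := by
  constructor
  · intro v
    have hc : (c : ℕ) < n := c.isLt
    fin_cases v
    · refine ⟨(⟨0, by omega⟩, 0), ?_⟩
      simp [F]
    · refine ⟨(⟨(c : ℕ) + 1, by omega⟩, 0), ?_⟩
      simp [F]
    · refine ⟨(⟨n + 1, by omega⟩, 0), ?_⟩
      simp only [F]
      rw [if_neg (by simp), if_neg (by simp; omega)]
      rfl
  · intro b b' hbb'
    have hle : (b.1 : ℕ) ≤ (b'.1 : ℕ) := by
      rcases hbb' with hlt | ⟨heq, -⟩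
      · exact le_of_lt hlt
      · exact le_of_eq (congrArg Fin.val heq)
    show F n c b ≤ F n c b'
    unfold F
    split_ifs <;> first | decide | (exfalso; omega)

lemma F_inj (n : ℕ) (c c' : Fin n) (h : ∀ b, F n c b = F n c' b) : c = c' := by
  have hcn : (c : ℕ) < n := c.isLt
  have h1 := h (⟨(c : ℕ) + 1, by omega⟩, 0)
  unfold F at h1
  simp only at h1
  split_ifs at h1 with h2 h3 h4 h5 h6 <;>
    first
      | (exact absurd h1 (by decide))
      | (exact Fin.ext (by omega))

end Stmt18Aux

open Stmt18Aux in
/-- The class of finite reflexive tournaments with surjective homomorphisms does not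
have dual small Ramsey degrees: for every `n ≥ 1` there is a finite reflexive
tournament `B` such that for every finite reflexive tournament `S` mapping onto `B`
there is an `n`-coloring of the surjective homomorphisms `S → A₃` which attains all
`n` colors on `{f ∘ w : f ∈ Surj(B, A₃)}` for every surjective homomorphism
`w : S → B`. -/
theorem stmt_18 (n : ℕ) (hn : 1 ≤ n) :
    ∃ (B : Type) (_ : Fintype B) (ρB : B → B → Prop), IsTournament ρB ∧
      ∀ (S : Type) (_ : Fintype S) (ρS : S → S → Prop), IsTournament ρS →
        (∃ q : S → B, SurjHom ρS ρB q) →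
        ∃ χ : {f : S → Fin 3 // SurjHom ρS A3 f} → Fin n,
          ∀ w : S → B, SurjHom ρS ρB w →
            ∀ c : Fin n, ∃ g : {f : S → Fin 3 // SurjHom ρS A3 f},
              (∃ f : B → Fin 3, SurjHom ρB A3 f ∧ g.1 = f ∘ w) ∧ χ g = c := by
  classical
  refine ⟨Fin (n+2) × Fin 3, inferInstance, rhoB n, rhoB_tournament n, ?_⟩
  intro S _ ρS hS hq
  obtain ⟨q, hq⟩ := hq
  have hFc : ∀ c : Fin n, SurjHom ρS A3 (F n c ∘ q) := fun c =>
    ⟨(F_surjhom n c).1.comp hq.1, fun x y hxy => (F_surjhom n c).2 _ _ (hq.2 x y hxy)⟩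
  refine ⟨fun g => if hc : ∃ c : Fin n, g.1 = F n c ∘ q then hc.choose else ⟨0, hn⟩, ?_⟩
  intro w hw c
  obtain ⟨f, hf, hfe⟩ := factor n ρS hS (F n c ∘ q) (hFc c) w hw
  refine ⟨⟨F n c ∘ q, hFc c⟩, ⟨f, hf, hfe⟩, ?_⟩
  have hex : ∃ c' : Fin n, (F n c ∘ q) = F n c' ∘ q := ⟨c, rfl⟩
  show (if hc : ∃ c' : Fin n, (F n c ∘ q) = F n c' ∘ q then hc.choose else ⟨0, hn⟩) = c
  rw [dif_pos hex]
  have hspec := hex.choose_spec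
  have hpt : ∀ b, F n hex.choose b = F n c b := by
    intro b
    obtain ⟨x, rfl⟩ := hq.1 b
    exact (congrFun hspec x).symm
  exact F_inj n _ _ hpt
end

section
/- There is no countable (finite or countably infinite) reflexive tournament S such that for every finite reflexive tournament T there exists a surjective homomorphism from S onto T. (That is, no countable reflexive tournament is projectively universal for the class of all finite reflexive tournaments; consequently finite reflexive tournaments have no dual big Ramsey degrees.) -/
/-- No countable reflexive tournament is projectively universal for the class of all
finite reflexive tournaments: there is no countable reflexive tournament `S` with a
surjective homomorphism onto every finite reflexive tournament. -/
theorem stmt_19 :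
    ¬∃ (S : Type) (_ : Countable S) (ρ : S → S → Prop), IsTournament ρ ∧
      ∀ (T : Type) (_ : Fintype T) (ρT : T → T → Prop), IsTournament ρT →
        ∃ f : S → T, Function.Surjective f ∧ ∀ x y : S, ρ x y → ρT (f x) (f y) := by
  rintro ⟨S, _, ρ, ⟨-, hasym⟩, h⟩
  -- the 2-element chain
  obtain ⟨f, hfs, hf⟩ := h Bool inferInstance (· ≤ ·)
    ⟨fun x => le_refl x, by decide⟩
  -- the 3-cycle
  obtain ⟨g, hgs, hg⟩ := h (ZMod 3) inferInstance (fun x y => y = x ∨ y = x + 1)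
    ⟨fun x => Or.inl rfl, by decide⟩
  -- cross condition between the two sides of the cut
  have cross : ∀ a b : S, f a = false → f b = true → g b = g a ∨ g b = g a + 1 := by
    intro a b ha hb
    have hne : a ≠ b := by
      intro e; rw [e, hb] at ha; exact Bool.noConfusion ha
    have hab : ρ a b := by
      by_contra hab
      have hba : ρ b a := by
        by_contra h'
        exact hab ((hasym a b hne).mpr h')
      have := hf b a hba
      rw [ha, hb] at this
      exact absurd this (by decide)
    exact hg a b hab
  obtain ⟨a₀, ha₀⟩ := hfs false
  obtain ⟨b₀, hb₀⟩ := hfs true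
  -- the "false" side hits every element of ZMod 3
  have step : ∀ u : ZMod 3, (∃ a, f a = false ∧ g a = u) →
      (∃ a, f a = false ∧ g a = u - 1) := by
    intro u ⟨a, ha, hga⟩
    obtain ⟨s, hs⟩ := hgs (u - 1)
    cases hfs' : f s with
    | false => exact ⟨s, hfs', hs⟩
    | true =>
      have lem : ∀ u : ZMod 3, ¬(u - 1 = u ∨ u - 1 = u + 1) := by decide
      have := cross a s ha hfs'
      rw [hs, hga] at this
      exact absurd this (lem u)
  have h0 : ∃ a, f a = false ∧ g a = g a₀ := ⟨a₀, ha₀, rfl⟩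
  have h1 := step _ h0
  have h2 := step _ h1
  have cov : ∀ u v : ZMod 3, v + 1 = u ∨ v + 1 = u - 1 ∨ v + 1 = u - 1 - 1 := by decide
  have hcover := cov (g a₀) (g b₀)
  have key : ∃ a, f a = false ∧ g a = g b₀ + 1 := by
    rcases hcover with hc | hc | hc
    · rw [hc]; exact h0
    · rw [hc]; exact h1
    · rw [hc]; exact h2
  obtain ⟨a, ha, hga⟩ := key
  have := cross a b₀ ha hb₀
  have lem2 : ∀ v : ZMod 3, ¬(v = v + 1 ∨ v = v + 1 + 1) := by decide
  rw [hga] at this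
  exact absurd this (lem2 (g b₀))
end
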